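/- arXiv:0804.2897 — 8 statements merged into one kernel-verified Lean document; each statement's English description precedes it below -/
import Mathlib

section
/- The set of quadratic binomials {x_{ij}x_{kl} − x_{ik}x_{jl}, x_{il}x_{jk} − x_{ik}x_{jl} : 1 ≤ i < j < k < l ≤ n} generates the toric ideal Iₙ = ker φₙ of the second hypersimplex. -/
open MvPolynomial

/-- Index set for the variables `x_{ij}`, `1 ≤ i < j ≤ n`. -/
def VarIdx (n : ℕ) := {p : Fin n × Fin n // p.1 < p.2}

/-- The map `φₙ : ℂ[x_{ij}] → ℂ[t₁,…,tₙ]`, `x_{ij} ↦ t_i t_j`. -/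
noncomputable def phi (n : ℕ) :
    MvPolynomial (VarIdx n) ℂ →+* MvPolynomial (Fin n) ℂ :=
  (aeval fun p : VarIdx n => X p.1.1 * X p.1.2 : _ →ₐ[ℂ] _).toRingHom

/-- The quadratic binomials replacing a noncrossing pair of chords by a crossing pair. -/
def quadBinomials (n : ℕ) : Set (MvPolynomial (VarIdx n) ℂ) :=
  {f | ∃ (i j k l : Fin n) (hij : i < j) (hjk : j < k) (hkl : k < l),
    (f = X ⟨(i, j), hij⟩ * X ⟨(k, l), hkl⟩ -
         X ⟨(i, k), hij.trans hjk⟩ * X ⟨(j, l), hjk.trans hkl⟩ ∨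
     f = X ⟨(i, l), (hij.trans hjk).trans hkl⟩ * X ⟨(j, k), hjk⟩ -
         X ⟨(i, k), hij.trans hjk⟩ * X ⟨(j, l), hjk.trans hkl⟩)}

/-
Since `φₙ(x^a) = t^{deg a}`, where `deg a` is the degree sequence of the multigraph `a` on
`{1, …, n}`, grouping the terms of `f ∈ ker φₙ` by degree sequence writes `f` as a combination of
binomials `x^a - x^b` with `deg a = deg b`. It therefore suffices that, modulo the quadrics, `x^a`
depends only on `deg a`. Modulo the quadrics the three perfect matchings of any four vertices
agree, so two disjoint edges `{i, k}, {j, l}` may be traded for `{i, j}, {k, l}`. Given an edge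
`{i, j}` of `a` and some `b` with the same degrees, `b` has edges `{i, k}` and `{j, l}`; if
`k ≠ l` one trade puts `{i, j}` into `b`. Otherwise `b` has an edge avoiding `k` (else all of
`b` passes through `k`, which the degree of `k` in `a` forbids), and at most two trades suffice.
Removing `{i, j}` from both sides, induction on the number of edges concludes.
-/

section MonomialMap

variable {σ τ R : Type*}

theorem MvPolynomial.prod_map_X_eq_monomial [CommSemiring R] [DecidableEq σ] (m : Multiset σ) :
    (m.map X).prod = (monomial (Multiset.toFinsupp m) 1 : MvPolynomial σ R) := by
  induction m using Multiset.induction_on with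
  | empty => simp
  | cons a m ih =>
    rw [Multiset.map_cons, Multiset.prod_cons, ih, ← Multiset.singleton_add,
      Multiset.toFinsupp_add, Multiset.toFinsupp_singleton, X, monomial_mul, one_mul]

theorem MvPolynomial.monomial_one_eq_prod_map_X [CommSemiring R] (a : σ →₀ ℕ) :
    (monomial a 1 : MvPolynomial σ R) = ((Finsupp.toMultiset a).map X).prod := by
  classical
  rw [prod_map_X_eq_monomial, Finsupp.toMultiset_toFinsupp]

theorem MvPolynomial.ker_le_of_map_monomial [CommRing R]
    {ψ : MvPolynomial σ R →+* MvPolynomial τ R} (D : (σ →₀ ℕ) → τ →₀ ℕ)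
    (hψ : ∀ a c, ψ (monomial a c) = monomial (D a) c) {I : Ideal (MvPolynomial σ R)}
    (hI : ∀ a b, D a = D b →
      Ideal.Quotient.mk I (monomial a 1) = Ideal.Quotient.mk I (monomial b 1)) :
    RingHom.ker ψ ≤ I := by
  classical
  intro f hf
  set π := Ideal.Quotient.mk I
  have hcoeff : ∀ d, ∑ a ∈ f.support with D a = d, coeff a f = coeff d (ψ f) := fun d => by
    conv_rhs => rw [f.as_sum, map_sum, coeff_sum]
    simp only [hψ, coeff_monomial, Finset.sum_filter]
  rw [← Ideal.Quotient.eq_zero_iff_mem, f.as_sum, map_sum,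
    ← Finset.sum_fiberwise_of_maps_to (g := D) (t := f.support.image D)
      (fun a ha => Finset.mem_image_of_mem D ha)]
  refine Finset.sum_eq_zero fun d hd => ?_
  obtain ⟨a₀, ha₀, rfl⟩ := Finset.mem_image.mp hd
  calc ∑ a ∈ f.support with D a = D a₀, π (monomial a (coeff a f))
      = ∑ a ∈ f.support with D a = D a₀, π (C (coeff a f)) * π (monomial a₀ 1) := by
        refine Finset.sum_congr rfl fun a ha => ?_
        rw [← hI a a₀ (Finset.mem_filter.mp ha).2, ← map_mul, C_mul_monomial, mul_one]
    _ = 0 := by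
        rw [← Finset.sum_mul, ← map_sum, ← map_sum, hcoeff, RingHom.mem_ker.mp hf, coeff_zero,
          C_0, map_zero, zero_mul]

end MonomialMap

namespace VarIdx

variable {n : ℕ}

def ends (e : VarIdx n) : Multiset (Fin n) := {e.1.1, e.1.2}

def ofNe {i j : Fin n} (h : i ≠ j) : VarIdx n :=
  if hlt : i < j then ⟨(i, j), hlt⟩ else ⟨(j, i), lt_of_le_of_ne (not_lt.mp hlt) h.symm⟩

theorem ofNe_of_lt {i j : Fin n} (h : i < j) : ofNe h.ne = ⟨(i, j), h⟩ := dif_pos h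

theorem ofNe_of_gt {i j : Fin n} (h : j < i) : ofNe h.ne' = ⟨(j, i), h⟩ := dif_neg h.not_gt

theorem ofNe_comm {i j : Fin n} (h : i ≠ j) : ofNe h = ofNe h.symm := by
  rcases h.lt_or_gt with hlt | hlt
  · rw [ofNe_of_lt hlt, ofNe_of_gt hlt]
  · rw [ofNe_of_lt hlt, ofNe_of_gt hlt]

theorem ends_ofNe {i j : Fin n} (h : i ≠ j) : ends (ofNe h) = {i, j} := by
  rcases h.lt_or_gt with hlt | hlt
  · rw [ofNe_of_lt hlt]; rfl
  · rw [ofNe_comm, ofNe_of_lt hlt]; exact Multiset.pair_comm _ _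

theorem exists_eq_ofNe (e : VarIdx n) : ∃ i j, ∃ h : i ≠ j, e = ofNe h :=
  ⟨_, _, e.2.ne, (ofNe_of_lt e.2).symm⟩

theorem exists_eq_ofNe_of_mem_ends {e : VarIdx n} {v : Fin n} (hv : v ∈ ends e) :
    ∃ w, ∃ h : v ≠ w, e = ofNe h := by
  obtain ⟨i, j, h, rfl⟩ := exists_eq_ofNe e
  rw [ends_ofNe, Multiset.insert_eq_cons, Multiset.mem_cons, Multiset.mem_singleton] at hv
  rcases hv with rfl | rfl
  · exact ⟨j, h, rfl⟩
  · exact ⟨i, h.symm, ofNe_comm h⟩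

theorem ofNe_ne_ofNe {i j k l : Fin n} (hij : i ≠ j) (hkl : k ≠ l) (hik : i ≠ k) (hil : i ≠ l) :
    ofNe hij ≠ ofNe hkl := fun h => by
  have hi : i ∈ ends (ofNe hkl) := h ▸ by simp [ends_ofNe]
  simp [ends_ofNe, hik, hil] at hi

theorem count_ends_le_one (e : VarIdx n) (v : Fin n) : (ends e).count v ≤ 1 := by
  obtain ⟨i, j, h, rfl⟩ := exists_eq_ofNe e
  rw [ends_ofNe, Multiset.insert_eq_cons, Multiset.count_cons, Multiset.count_singleton]
  split_ifs <;> omega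

end VarIdx

section Quadrics

variable {n : ℕ}

open VarIdx Multiset

def endpoints (s : Multiset (VarIdx n)) : Multiset (Fin n) := s.bind ends

theorem endpoints_cons (e : VarIdx n) (s : Multiset (VarIdx n)) :
    endpoints (e ::ₘ s) = ends e + endpoints s :=
  cons_bind _ _ _

theorem card_endpoints (s : Multiset (VarIdx n)) : card (endpoints s) = 2 * card s := by
  induction s using Multiset.induction_on with
  | empty => simp [endpoints]
  | cons e s ih =>
    obtain ⟨i, j, h, rfl⟩ := exists_eq_ofNe e
    simp only [endpoints_cons, card_add, ih, card_cons, ends_ofNe, insert_eq_cons,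
      card_singleton]
    ring

theorem count_endpoints_le_card (v : Fin n) (s : Multiset (VarIdx n)) :
    count v (endpoints s) ≤ card s := by
  induction s using Multiset.induction_on with
  | empty => simp [endpoints]
  | cons e s ih =>
    rw [endpoints_cons, count_add, card_cons]
    have := count_ends_le_one e v
    omega

theorem count_endpoints_of_forall_mem_ends {v : Fin n} {s : Multiset (VarIdx n)}
    (h : ∀ f ∈ s, v ∈ ends f) : count v (endpoints s) = card s := by
  induction s using Multiset.induction_on with
  | empty => simp [endpoints]
  | cons e s ih =>
    rw [endpoints_cons, count_add, card_cons,
      ih fun f hf => h f (mem_cons_of_mem hf), add_comm]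
    have := count_ends_le_one e v
    have := count_pos.mpr (h e (mem_cons_self e s))
    omega

theorem exists_mem_not_mem_ends {e : VarIdx n} {s t : Multiset (VarIdx n)}
    (h : endpoints (e ::ₘ s) = endpoints t) {v : Fin n} (hv : v ∉ ends e) :
    ∃ f ∈ t, v ∉ ends f := by
  by_contra! hall
  have hcard := congrArg card h
  rw [card_endpoints, card_endpoints, card_cons] at hcard
  have hcount := count_endpoints_of_forall_mem_ends hall
  rw [← h, endpoints_cons, count_add, count_eq_zero.mpr hv] at hcount
  have := count_endpoints_le_card v s
  omega

local notation "π" => Ideal.Quotient.mk (Ideal.span (quadBinomials n))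

theorem mk_X_mul_mk_X_of_lt {i j k l : Fin n} (hij : i < j) (hjk : j < k) (hkl : k < l) :
    π (X (ofNe hij.ne)) * π (X (ofNe hkl.ne)) =
        π (X (ofNe (hij.trans hjk).ne)) * π (X (ofNe (hjk.trans hkl).ne)) ∧
      π (X (ofNe ((hij.trans hjk).trans hkl).ne)) * π (X (ofNe hjk.ne)) =
        π (X (ofNe (hij.trans hjk).ne)) * π (X (ofNe (hjk.trans hkl).ne)) := by
  rw [ofNe_of_lt hij, ofNe_of_lt hkl, ofNe_of_lt (hij.trans hjk), ofNe_of_lt (hjk.trans hkl),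
    ofNe_of_lt ((hij.trans hjk).trans hkl), ofNe_of_lt hjk, ← map_mul, ← map_mul, ← map_mul,
    Ideal.Quotient.eq, Ideal.Quotient.eq]
  exact ⟨Ideal.subset_span ⟨i, j, k, l, hij, hjk, hkl, Or.inl rfl⟩,
    Ideal.subset_span ⟨i, j, k, l, hij, hjk, hkl, Or.inr rfl⟩⟩

theorem mk_matchings_eq {p q r s : Fin n} (hpq : p ≠ q) (hrs : r ≠ s) (hpr : p ≠ r)
    (hqs : q ≠ s) (hps : p ≠ s) (hqr : q ≠ r) :
    π (X (ofNe hpq)) * π (X (ofNe hrs)) = π (X (ofNe hpr)) * π (X (ofNe hqs)) ∧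
      π (X (ofNe hpq)) * π (X (ofNe hrs)) = π (X (ofNe hps)) * π (X (ofNe hqr)) := by
  -- Permuting `p, q, r, s` permutes the three matchings, so we may order the four vertices.
  wlog hpq' : p < q generalizing p q r s
  · obtain ⟨h₁, h₂⟩ := this hpq.symm hrs hqr hps hqs hpr (hpq.symm.lt_of_le (not_lt.mp hpq'))
    rw [ofNe_comm hpq.symm] at h₁ h₂
    exact ⟨h₂.trans (mul_comm _ _), h₁.trans (mul_comm _ _)⟩
  wlog hrs' : r < s generalizing r s
  · obtain ⟨h₁, h₂⟩ := this hrs.symm hps hqr hpr hqs (hrs.symm.lt_of_le (not_lt.mp hrs'))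
    rw [ofNe_comm hrs.symm] at h₁ h₂
    exact ⟨h₂, h₁⟩
  wlog hpr' : p < r generalizing p q r s
  · obtain ⟨h₁, h₂⟩ := this hrs hrs' hpq hpr.symm hqs.symm hqr.symm hps.symm hpq'
      (hpr.symm.lt_of_le (not_lt.mp hpr'))
    rw [ofNe_comm hpr.symm, ofNe_comm hqs.symm] at h₁
    rw [ofNe_comm hqr.symm, ofNe_comm hps.symm] at h₂
    exact ⟨(mul_comm _ _).trans h₁, (mul_comm _ _).trans (h₂.trans (mul_comm _ _))⟩
  rcases lt_or_gt_of_ne hqr with hqr' | hrq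
  · obtain ⟨h₁, h₂⟩ := mk_X_mul_mk_X_of_lt hpq' hqr' hrs'
    exact ⟨h₁, h₁.trans h₂.symm⟩
  rcases lt_or_gt_of_ne hqs with hqs' | hsq
  · obtain ⟨h₁, h₂⟩ := mk_X_mul_mk_X_of_lt hpr' hrq hqs'
    rw [ofNe_comm hrq.ne] at h₂
    exact ⟨h₁.symm, h₂.symm⟩
  · obtain ⟨h₁, h₂⟩ := mk_X_mul_mk_X_of_lt hpr' hrs' hsq
    rw [ofNe_comm hsq.ne, ofNe_comm hrq.ne] at h₁
    rw [ofNe_comm hrq.ne] at h₂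
    exact ⟨h₂.trans h₁.symm, h₂⟩

def QuadEquiv (s t : Multiset (VarIdx n)) : Prop :=
  endpoints s = endpoints t ∧ π (s.map X).prod = π (t.map X).prod

theorem QuadEquiv.refl (s : Multiset (VarIdx n)) : QuadEquiv s s := ⟨rfl, rfl⟩

theorem QuadEquiv.symm {s t : Multiset (VarIdx n)} (h : QuadEquiv s t) : QuadEquiv t s :=
  ⟨h.1.symm, h.2.symm⟩

theorem QuadEquiv.trans {s t u : Multiset (VarIdx n)} (h₁ : QuadEquiv s t)
    (h₂ : QuadEquiv t u) : QuadEquiv s u :=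
  ⟨h₁.1.trans h₂.1, h₁.2.trans h₂.2⟩

theorem quadEquiv_swap {i j k l : Fin n} (hij : i ≠ j) (hik : i ≠ k) (hjl : j ≠ l) (hkl : k ≠ l)
    (hil : i ≠ l) (hjk : j ≠ k) (r : Multiset (VarIdx n)) :
    QuadEquiv (ofNe hik ::ₘ ofNe hjl ::ₘ r) (ofNe hij ::ₘ ofNe hkl ::ₘ r) := by
  constructor
  · rw [endpoints_cons, endpoints_cons, endpoints_cons, endpoints_cons, ends_ofNe, ends_ofNe,
      ends_ofNe, ends_ofNe]
    simp only [insert_eq_cons, ← singleton_add]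
    abel
  · simp only [map_cons, prod_cons, map_mul, ← mul_assoc,
      (mk_matchings_eq hik hjl hij hkl hil hjk.symm).1]

theorem exists_quadEquiv_cons_of_mem {i j k l : Fin n} (hij : i ≠ j) (hik : i ≠ k) (hjl : j ≠ l)
    (hkl : k ≠ l) (hil : i ≠ l) (hjk : j ≠ k) {t : Multiset (VarIdx n)}
    (hf : ofNe hik ∈ t) (hg : ofNe hjl ∈ t) : ∃ t₀, QuadEquiv (ofNe hij ::ₘ t₀) t := by
  obtain ⟨r, rfl⟩ := exists_cons_of_mem hf
  obtain ⟨r', rfl⟩ :=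
    exists_cons_of_mem ((mem_cons.mp hg).resolve_left (ofNe_ne_ofNe hik hjl hij hil).symm)
  exact ⟨ofNe hkl ::ₘ r', (quadEquiv_swap hij hik hjl hkl hil hjk r').symm⟩

/-- Used when all edges of `t` at `i` and at `j` end at the same vertex `k`: an edge `e`
avoiding `k` makes room for `{i, j}` within two quadric moves. -/
theorem exists_quadEquiv_cons_of_mem_of_mem {i j k : Fin n} (hij : i ≠ j) (hik : i ≠ k)
    (hjk : j ≠ k) {e : VarIdx n} {t : Multiset (VarIdx n)} (het : ofNe hij ∉ t)
    (hf : ofNe hik ∈ t) (hg : ofNe hjk ∈ t) (he : e ∈ t) (hke : k ∉ ends e) :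
    ∃ t₀, QuadEquiv (ofNe hij ::ₘ t₀) t := by
  by_cases hie : i ∈ ends e
  · obtain ⟨q, hiq, rfl⟩ := exists_eq_ofNe_of_mem_ends hie
    have hqk : q ≠ k := by rintro rfl; simp [ends_ofNe] at hke
    have hjq : j ≠ q := by rintro rfl; exact het he
    exact exists_quadEquiv_cons_of_mem hij hiq hjk hqk hik hjq he hg
  by_cases hje : j ∈ ends e
  · obtain ⟨q, hjq, rfl⟩ := exists_eq_ofNe_of_mem_ends hje
    have hkq : k ≠ q := by rintro rfl; simp [ends_ofNe] at hke
    have hiq : i ≠ q := by rintro rfl; exact het (ofNe_comm hjq ▸ he)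
    exact exists_quadEquiv_cons_of_mem hij hik hjq hkq hiq hjk hf he
  obtain ⟨p, q, hpq, rfl⟩ := exists_eq_ofNe e
  simp only [ends_ofNe, insert_eq_cons, mem_cons, mem_singleton, not_or] at hke hie hje
  obtain ⟨hkp, hkq⟩ := hke
  obtain ⟨hip, hiq⟩ := hie
  obtain ⟨hjp, hjq⟩ := hje
  obtain ⟨r, rfl⟩ := exists_cons_of_mem hf
  obtain ⟨r', rfl⟩ := exists_cons_of_mem
    ((mem_cons.mp he).resolve_left (ofNe_ne_ofNe hpq hik (Ne.symm hip) (Ne.symm hkp)))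
  have hg' : ofNe hjk ∈ r' :=
    (mem_cons.mp ((mem_cons.mp hg).resolve_left (ofNe_ne_ofNe hjk hik hij.symm hjk))).resolve_left
      (ofNe_ne_ofNe hjk hpq hjp hjq)
  have hswap := quadEquiv_swap hip hik hpq hkq hiq (Ne.symm hkp) r'
  obtain ⟨t₀, ht₀⟩ := exists_quadEquiv_cons_of_mem hij hip hjk (Ne.symm hkp) hik hjp
    (mem_cons_self _ _) (mem_cons_of_mem (mem_cons_of_mem hg'))
  exact ⟨t₀, ht₀.trans hswap.symm⟩

theorem exists_quadEquiv_cons {e : VarIdx n} {s t : Multiset (VarIdx n)}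
    (h : endpoints (e ::ₘ s) = endpoints t) : ∃ t₀, QuadEquiv (e ::ₘ t₀) t := by
  by_cases het : e ∈ t
  · obtain ⟨t₀, rfl⟩ := exists_cons_of_mem het
    exact ⟨t₀, .refl _⟩
  obtain ⟨i, j, hij, rfl⟩ := exists_eq_ofNe e
  have edge_at : ∀ v ∈ ends (ofNe hij), ∃ w, ∃ hvw : v ≠ w, ofNe hvw ∈ t := fun v hv => by
    have hvt : v ∈ endpoints t := h ▸ mem_bind.mpr ⟨_, mem_cons_self _ _, hv⟩
    obtain ⟨f, hf, hvf⟩ := mem_bind.mp hvt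
    obtain ⟨w, hvw, rfl⟩ := exists_eq_ofNe_of_mem_ends hvf
    exact ⟨w, hvw, hf⟩
  obtain ⟨k, hik, hf⟩ := edge_at i (by simp [ends_ofNe])
  obtain ⟨l, hjl, hg⟩ := edge_at j (by simp [ends_ofNe])
  have hkj : k ≠ j := by rintro rfl; exact het hf
  have hli : l ≠ i := by rintro rfl; exact het (ofNe_comm hjl ▸ hg)
  rcases ne_or_eq k l with hkl | rfl
  · exact exists_quadEquiv_cons_of_mem hij hik hjl hkl hli.symm hkj.symm hf hg
  obtain ⟨e', he', hke'⟩ := exists_mem_not_mem_ends h (v := k)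
    (by simp [ends_ofNe, hik.symm, hkj])
  exact exists_quadEquiv_cons_of_mem_of_mem hij hik hjl het hf hg he' hke'

theorem mk_prod_eq_of_endpoints_eq {s t : Multiset (VarIdx n)}
    (h : endpoints s = endpoints t) : π (s.map X).prod = π (t.map X).prod := by
  induction s using Multiset.induction_on generalizing t with
  | empty =>
    have hcard : card t = 0 := by simpa [card_endpoints] using (congrArg card h).symm
    rw [card_eq_zero.mp hcard]
  | cons e s ih =>
    obtain ⟨t₀, hend, hmk⟩ := exists_quadEquiv_cons h
    have hs : endpoints s = endpoints t₀ :=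
      add_left_cancel (by rw [← endpoints_cons, ← endpoints_cons, h, hend])
    rw [← hmk, map_cons, prod_cons, map_cons, prod_cons, map_mul, map_mul, ih hs]

end Quadrics

section SecondHypersimplex

variable {n : ℕ}

open VarIdx

theorem phi_X_mk {i j : Fin n} (h : i < j) : phi n (X ⟨(i, j), h⟩) = X i * X j := aeval_X _ _

theorem phi_monomial (a : VarIdx n →₀ ℕ) (c : ℂ) :
    phi n (monomial a c) =
      monomial (Multiset.toFinsupp (endpoints (Finsupp.toMultiset a))) c := by
  rw [← mul_one c, ← C_mul_monomial, ← C_mul_monomial, monomial_one_eq_prod_map_X,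
    ← prod_map_X_eq_monomial, map_mul, map_multiset_prod, Multiset.map_map]
  simp [phi, endpoints, ends, Multiset.map_bind]

theorem quadBinomials_subset_ker : quadBinomials n ⊆ RingHom.ker (phi n) := by
  rintro g ⟨i, j, k, l, hij, hjk, hkl, rfl | rfl⟩ <;>
    rw [SetLike.mem_coe, RingHom.mem_ker, map_sub, map_mul, map_mul, phi_X_mk, phi_X_mk,
      phi_X_mk, phi_X_mk, sub_eq_zero] <;> ring

end SecondHypersimplex

/-- The quadratic binomials generate the toric ideal `Iₙ = ker φₙ` of the
second hypersimplex. -/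
theorem secondHypersimplex_toric_ideal_generated_by_quadrics (n : ℕ) :
    Ideal.span (quadBinomials n) = RingHom.ker (phi n) := by
  refine le_antisymm (Ideal.span_le.mpr quadBinomials_subset_ker)
    (ker_le_of_map_monomial _ phi_monomial fun a b hab => ?_)
  rw [monomial_one_eq_prod_map_X a, monomial_one_eq_prod_map_X b]
  exact mk_prod_eq_of_endpoints_eq (Multiset.toFinsupp.injective hab)
end

section
/- For any graph G with edge ideal I(G), the second symbolic power satisfies I(G)^{(2)} = I(G)² + I(G)^{2*}, where I(G)^{2*} is the second secant ideal; in particular I(G)^{(2)} is generated by the monomials x_i x_j x_k for triangles {i,j,k} of G together with the monomials x_i x_j x_k x_l for pairs of (not necessarily vertex-disjoint) edges ij, kl of G. -/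
/-!
Every prime `p ⊇ I(G)` contains the prime `(x_v : v ∈ C)` of the vertex cover
`C = {v | x_v ∈ p}`, and every such prime contains `I(G)`. Hence each monomial `x^m` occurring in
an element of `I(G)^{(2)}` meets every vertex cover with multiplicity at least two, and a short case
analysis on the support of `m` shows that `x^m` is then divisible by a triangle or by a product of
two edges. These products lie in `I(G)²` or, for a triangle, in `I(G)^{2*}`: after substituting
`x = y + z`, each of the eight terms of `(y_i + z_i)(y_j + z_j)(y_k + z_k)` has two factors from
the same copy on an edge. Finally `I(G)^{2*} ⊆ (x_v : v ∈ C)²` for every vertex cover `C`, by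
specialising `y` to the variables outside `C` and `z` to those in `C`.
-/

open MvPolynomial

variable (K : Type*) [Field K] [IsAlgClosed K]

/-- The edge ideal of a graph `G` on `[n]`. -/
noncomputable def edgeIdeal (n : ℕ) (G : SimpleGraph (Fin n)) :
    Ideal (MvPolynomial (Fin n) K) :=
  Ideal.span {f | ∃ i j : Fin n, G.Adj i j ∧ f = X i * X j}

/-- The second secant ideal of an ideal `I ⊆ K[x]`, via the join construction. -/
noncomputable def secantIdeal2 (n : ℕ) (I : Ideal (MvPolynomial (Fin n) K)) :
    Ideal (MvPolynomial (Fin n) K) :=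
  Ideal.comap (rename (fun v : Fin n => ((0 : Fin 3), v)) : _ →ₐ[K] _)
    (Ideal.map (rename (fun v : Fin n => ((1 : Fin 3), v)) : _ →ₐ[K] _) I ⊔
     Ideal.map (rename (fun v : Fin n => ((2 : Fin 3), v)) : _ →ₐ[K] _) I ⊔
     Ideal.span {f | ∃ i : Fin n, f = X (0, i) - X (1, i) - X (2, i)})

/-- The second symbolic power of an ideal: the intersection of the squares of
its minimal primes. -/
noncomputable def symbolicSquare (n : ℕ) (I : Ideal (MvPolynomial (Fin n) K)) :
    Ideal (MvPolynomial (Fin n) K) :=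
  ⨅ p ∈ I.minimalPrimes, p ^ 2

namespace MvPolynomial

variable {σ R : Type*} [CommRing R]

open scoped Classical in
noncomputable def zeroOn (C : Set σ) : MvPolynomial σ R →ₐ[R] MvPolynomial σ R :=
  aeval fun v => if v ∈ C then 0 else X v

@[simp]
theorem zeroOn_X_of_mem {C : Set σ} {v : σ} (hv : v ∈ C) :
    zeroOn C (X v : MvPolynomial σ R) = 0 := by
  simp [zeroOn, hv]

@[simp]
theorem zeroOn_X_of_notMem {C : Set σ} {v : σ} (hv : v ∉ C) :
    zeroOn C (X v : MvPolynomial σ R) = X v := by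
  simp [zeroOn, hv]

theorem zeroOn_X_add_zeroOn_compl_X (C : Set σ) (v : σ) :
    zeroOn C (X v : MvPolynomial σ R) + zeroOn Cᶜ (X v) = X v := by
  by_cases hv : v ∈ C <;> simp [hv]

theorem sub_zeroOn_mem_span_X_image (C : Set σ) (f : MvPolynomial σ R) :
    f - zeroOn C f ∈ Ideal.span (X '' C) := by
  induction f using MvPolynomial.induction_on with
  | C a => simp [zeroOn]
  | add p q hp hq => simpa only [map_add, add_sub_add_comm] using add_mem hp hq
  | mul_X p v hp =>
    have hv : X v - zeroOn C (X v) ∈ Ideal.span (X '' C : Set (MvPolynomial σ R)) := by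
      by_cases h : v ∈ C
      · simpa [h] using Ideal.subset_span (Set.mem_image_of_mem X h)
      · simp [h]
    have : p * X v - zeroOn C (p * X v) =
        (p - zeroOn C p) * X v + zeroOn C p * (X v - zeroOn C (X v)) := by
      rw [map_mul]; ring
    rw [this]
    exact add_mem (Ideal.mul_mem_right _ _ hp) (Ideal.mul_mem_left _ _ hv)

theorem ker_zeroOn (C : Set σ) :
    RingHom.ker (zeroOn C : MvPolynomial σ R →ₐ[R] _) = Ideal.span (X '' C) := by
  refine le_antisymm (fun f hf => ?_) (Ideal.span_le.2 ?_)
  · simpa [(RingHom.mem_ker).1 hf] using sub_zeroOn_mem_span_X_image C f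
  · rintro _ ⟨v, hv, rfl⟩
    simp [hv]

theorem isPrime_span_X_image [IsDomain R] (C : Set σ) :
    (Ideal.span (X '' C : Set (MvPolynomial σ R))).IsPrime :=
  ker_zeroOn (R := R) C ▸ RingHom.ker_isPrime _

theorem mem_span_X_image_sq_iff {C : Set σ} {f : MvPolynomial σ R} :
    f ∈ Ideal.span (X '' C) ^ 2 ↔
      ∀ m ∈ f.support, ∃ a ∈ C, ∃ b ∈ C, Finsupp.single a 1 + Finsupp.single b 1 ≤ m := by
  have : Ideal.span (X '' C : Set (MvPolynomial σ R)) ^ 2 = Ideal.span ((fun s => monomial s 1) ''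
      {s | ∃ a ∈ C, ∃ b ∈ C, s = Finsupp.single a 1 + Finsupp.single b 1}) := by
    rw [pow_two, Ideal.span_mul_span']
    congr 1
    ext f
    simp only [Set.mem_mul, Set.mem_image]
    constructor
    · rintro ⟨_, ⟨a, ha, rfl⟩, _, ⟨b, hb, rfl⟩, rfl⟩
      exact ⟨_, ⟨a, ha, b, hb, rfl⟩, by simp [X, monomial_mul]⟩
    · rintro ⟨_, ⟨a, ha, b, hb, rfl⟩, rfl⟩
      exact ⟨_, ⟨a, ha, rfl⟩, _, ⟨b, hb, rfl⟩, by simp [X, monomial_mul]⟩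
  rw [this, mem_ideal_span_monomial_image]
  refine forall₂_congr fun m _ => ⟨?_, ?_⟩
  · rintro ⟨_, ⟨a, ha, b, hb, rfl⟩, hle⟩
    exact ⟨a, ha, b, hb, hle⟩
  · rintro ⟨a, ha, b, hb, hle⟩
    exact ⟨_, ⟨a, ha, b, hb, rfl⟩, hle⟩

end MvPolynomial

namespace SimpleGraph

open Finsupp

variable {V : Type*} {G : SimpleGraph V} {m : V →₀ ℕ}

def trianglesAndEdgePairs (G : SimpleGraph V) : Set (V →₀ ℕ) :=
  {s | ∃ i j k, G.Adj i j ∧ G.Adj j k ∧ G.Adj k i ∧ s = single i 1 + single j 1 + single k 1} ∪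
    {s | ∃ i j k l, G.Adj i j ∧ G.Adj k l ∧
      s = single i 1 + single j 1 + single k 1 + single l 1}

theorem exists_adj_notMem_of_forall_isVertexCover
    (h : ∀ C, G.IsVertexCover C → ∃ a ∈ C, ∃ b ∈ C, single a 1 + single b 1 ≤ m)
    {T : Set V} (hT : ∀ a ∈ T, ∀ b ∈ T, ¬ single a 1 + single b 1 ≤ m) :
    ∃ u v, G.Adj u v ∧ 0 < m u ∧ 0 < m v ∧ u ∉ T ∧ v ∉ T := by
  by_contra! hcover
  obtain ⟨a, ha, b, hb, hab⟩ := h ({v | m v = 0} ∪ T) fun u v huv => by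
    by_cases hu : m u = 0
    · exact .inl (.inl hu)
    by_cases hv : m v = 0
    · exact .inr (.inl hv)
    by_cases huT : u ∈ T
    · exact .inl (.inr huT)
    · exact .inr (.inr (hcover u v huv (by omega) (by omega) huT))
  have ha₀ : m a ≠ 0 := (lt_of_lt_of_le (by simp) (hab a)).ne'
  have hb₀ : m b ≠ 0 := (lt_of_lt_of_le (by simp) (hab b)).ne'
  exact hT a (ha.resolve_left ha₀) b (hb.resolve_left hb₀) hab

theorem exists_adj_ne_of_forall_isVertexCover
    (h : ∀ C, G.IsVertexCover C → ∃ a ∈ C, ∃ b ∈ C, single a 1 + single b 1 ≤ m)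
    (hno : ∀ s ∈ G.trianglesAndEdgePairs, ¬ s ≤ m) {x y : V} (hxy : G.Adj x y) (hx : m x = 1)
    (hy : 0 < m y) :
    ∃ v, G.Adj y v ∧ 0 < m v ∧ v ≠ x := by
  have hxx : ¬ single x 1 + single x 1 ≤ m := fun hle => by
    simpa [hx] using hle x
  obtain ⟨u, v, huv, hu, hv, hux, hvx⟩ :=
    exists_adj_notMem_of_forall_isVertexCover h (T := {x}) (by simpa using hxx)
  rw [Set.mem_singleton_iff] at hux hvx
  by_cases huy : u = y
  · exact ⟨v, huy ▸ huv, hv, hvx⟩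
  by_cases hvy : v = y
  · exact ⟨u, hvy ▸ huv.symm, hu, hux⟩
  classical
  have := hxy.ne
  have := huv.ne
  refine absurd (fun w => ?_) (hno _ (.inr ⟨x, y, u, v, hxy, huv, rfl⟩))
  simp only [Finsupp.coe_add, Pi.add_apply, single_apply]
  grind

theorem exists_mem_trianglesAndEdgePairs_le
    (h : ∀ C, G.IsVertexCover C → ∃ a ∈ C, ∃ b ∈ C, single a 1 + single b 1 ≤ m) :
    ∃ s ∈ G.trianglesAndEdgePairs, s ≤ m := by
  classical
  by_contra! hno
  obtain ⟨a, b, hab, ha, hb, -, -⟩ :=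
    exists_adj_notMem_of_forall_isVertexCover h (T := ∅) (by simp)
  have := hab.ne
  obtain ⟨x, y, hxy, hx, hy⟩ : ∃ x y, G.Adj x y ∧ m x = 1 ∧ 0 < m y := by
    by_cases ha₁ : m a = 1
    · exact ⟨a, b, hab, ha₁, hb⟩
    by_cases hb₁ : m b = 1
    · exact ⟨b, a, hab.symm, hb₁, ha⟩
    refine absurd (fun w => ?_) (hno _ (.inr ⟨a, b, a, b, hab, hab, rfl⟩))
    simp only [Finsupp.coe_add, Pi.add_apply, single_apply]
    grind
  obtain ⟨v, hyv, hv, hvx⟩ := exists_adj_ne_of_forall_isVertexCover h hno hxy hx hy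
  have := hxy.ne
  have := hyv.ne
  have hy₁ : m y = 1 := by
    by_contra hy₁
    refine hno _ (.inr ⟨y, x, y, v, hxy.symm, hyv, rfl⟩) fun w => ?_
    simp only [Finsupp.coe_add, Pi.add_apply, single_apply]
    grind
  obtain ⟨w, hxw, hw, hwy⟩ := exists_adj_ne_of_forall_isVertexCover h hno hxy.symm hy₁
    (by omega)
  have := hxw.ne
  -- the support edges `xw` and `yv` through the two ends of `xy` close a triangle or are disjoint
  rcases eq_or_ne w v with rfl | hwv
  · refine hno _ (.inl ⟨x, y, w, hxy, hyv, hxw.symm, rfl⟩) fun u => ?_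
    simp only [Finsupp.coe_add, Pi.add_apply, single_apply]
    grind
  · refine hno _ (.inr ⟨x, w, y, v, hxw, hyv, rfl⟩) fun u => ?_
    simp only [Finsupp.coe_add, Pi.add_apply, single_apply]
    grind

end SimpleGraph

theorem add_mul_add_mul_add_eq_zero {R : Type*} [CommRing R] {a₁ a₂ a₃ b₁ b₂ b₃ : R}
    (ha₁₂ : a₁ * a₂ = 0) (ha₁₃ : a₁ * a₃ = 0) (ha₂₃ : a₂ * a₃ = 0)
    (hb₁₂ : b₁ * b₂ = 0) (hb₁₃ : b₁ * b₃ = 0) (hb₂₃ : b₂ * b₃ = 0) :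
    (a₁ + b₁) * (a₂ + b₂) * (a₃ + b₃) = 0 := by
  linear_combination (a₃ + b₃) * ha₁₂ + b₂ * ha₁₃ + b₁ * ha₂₃ + (a₃ + b₃) * hb₁₂ + a₂ * hb₁₃ +
    a₁ * hb₂₃

section EdgeIdeal

variable {F : Type*} [Field F] {n : ℕ} {G : SimpleGraph (Fin n)}

theorem X_mul_X_mem_edgeIdeal {i j : Fin n} (hij : G.Adj i j) :
    X i * X j ∈ edgeIdeal F n G :=
  Ideal.subset_span ⟨i, j, hij, rfl⟩

theorem edgeIdeal_le_span_X_image {C : Set (Fin n)} (hC : G.IsVertexCover C) :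
    edgeIdeal F n G ≤ Ideal.span (X '' C) := by
  refine Ideal.span_le.2 ?_
  rintro _ ⟨i, j, hij, rfl⟩
  rcases hC hij with h | h
  · exact Ideal.mul_mem_right _ _ (Ideal.subset_span ⟨i, h, rfl⟩)
  · exact Ideal.mul_mem_left _ _ (Ideal.subset_span ⟨j, h, rfl⟩)

theorem isVertexCover_setOf_X_mem {p : Ideal (MvPolynomial (Fin n) F)} (hp : p.IsPrime)
    (h : edgeIdeal F n G ≤ p) : G.IsVertexCover {v | X v ∈ p} :=
  fun _ _ hij => hp.mem_or_mem (h (X_mul_X_mem_edgeIdeal hij))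

theorem symbolicSquare_le_pow_two {I q : Ideal (MvPolynomial (Fin n) F)} (hq : q.IsPrime)
    (h : I ≤ q) : symbolicSquare F n I ≤ q ^ 2 := by
  obtain ⟨p, hp, hpq⟩ := Ideal.exists_minimalPrimes_le h
  exact (biInf_le _ hp).trans (Ideal.pow_right_mono hpq 2)

theorem le_symbolicSquare {I J : Ideal (MvPolynomial (Fin n) F)}
    (h : ∀ p : Ideal (MvPolynomial (Fin n) F), p.IsPrime → I ≤ p → J ≤ p ^ 2) :
    J ≤ symbolicSquare F n I :=
  le_iInf₂ fun p hp => h p hp.1.1 hp.1.2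

theorem image_monomial_trianglesAndEdgePairs :
    (fun s => monomial s (1 : F)) '' G.trianglesAndEdgePairs =
      {f | ∃ i j k : Fin n, G.Adj i j ∧ G.Adj j k ∧ G.Adj k i ∧ f = X i * X j * X k} ∪
        {f | ∃ i j k l : Fin n, G.Adj i j ∧ G.Adj k l ∧ f = X i * X j * X k * X l} := by
  ext f
  simp only [SimpleGraph.trianglesAndEdgePairs, Set.image_union, Set.mem_union, Set.mem_image,
    Set.mem_ofPred_eq]
  refine or_congr ⟨?_, ?_⟩ ⟨?_, ?_⟩
  · rintro ⟨_, ⟨i, j, k, hij, hjk, hki, rfl⟩, rfl⟩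
    exact ⟨i, j, k, hij, hjk, hki, by simp [X, monomial_mul]⟩
  · rintro ⟨i, j, k, hij, hjk, hki, rfl⟩
    exact ⟨_, ⟨i, j, k, hij, hjk, hki, rfl⟩, by simp [X, monomial_mul]⟩
  · rintro ⟨_, ⟨i, j, k, l, hij, hkl, rfl⟩, rfl⟩
    exact ⟨i, j, k, l, hij, hkl, by simp [X, monomial_mul]⟩
  · rintro ⟨i, j, k, l, hij, hkl, rfl⟩
    exact ⟨_, ⟨i, j, k, l, hij, hkl, rfl⟩, by simp [X, monomial_mul]⟩

theorem symbolicSquare_edgeIdeal_le_span :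
    symbolicSquare F n (edgeIdeal F n G) ≤
      Ideal.span ((fun s => monomial s 1) '' G.trianglesAndEdgePairs) := by
  intro f hf
  refine mem_ideal_span_monomial_image.2 fun m hm =>
    SimpleGraph.exists_mem_trianglesAndEdgePairs_le fun C hC => ?_
  have hsq := symbolicSquare_le_pow_two (isPrime_span_X_image C) (edgeIdeal_le_span_X_image hC) hf
  exact mem_span_X_image_sq_iff.1 hsq m hm

theorem secantIdeal2_le {I J : Ideal (MvPolynomial (Fin n) F)}
    (φ ψ : MvPolynomial (Fin n) F →ₐ[F] MvPolynomial (Fin n) F)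
    (hX : ∀ v, φ (X v) + ψ (X v) = X v) (hφ : I ≤ J.comap φ) (hψ : I ≤ J.comap ψ) :
    secantIdeal2 F n I ≤ J := by
  let θ : MvPolynomial (Fin 3 × Fin n) F →ₐ[F] MvPolynomial (Fin n) F :=
    aeval fun q => ![X q.2, φ (X q.2), ψ (X q.2)] q.1
  have hθ₀ : θ.comp (rename fun v => ((0 : Fin 3), v)) = AlgHom.id F _ :=
    algHom_ext fun v => by simp [θ]
  have hθ₁ : θ.comp (rename fun v => ((1 : Fin 3), v)) = φ := algHom_ext fun v => by simp [θ]
  have hθ₂ : θ.comp (rename fun v => ((2 : Fin 3), v)) = ψ := algHom_ext fun v => by simp [θ]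
  have hle : Ideal.map (rename fun v => ((1 : Fin 3), v)) I ⊔
      Ideal.map (rename fun v => ((2 : Fin 3), v)) I ⊔
      Ideal.span {f | ∃ i : Fin n, f = X (0, i) - X (1, i) - X (2, i)} ≤ J.comap θ := by
    refine sup_le (sup_le ?_ ?_) (Ideal.span_le.2 ?_)
    · refine Ideal.map_le_iff_le_comap.2 fun f hf => ?_
      simpa [Ideal.mem_comap, ← AlgHom.comp_apply, hθ₁] using hφ hf
    · refine Ideal.map_le_iff_le_comap.2 fun f hf => ?_
      simpa [Ideal.mem_comap, ← AlgHom.comp_apply, hθ₂] using hψ hf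
    · rintro _ ⟨v, rfl⟩
      have : X v - φ (X v) - ψ (X v) = 0 := by rw [sub_sub, hX, sub_self]
      simp [θ, this]
  intro f hf
  have := hle (Ideal.mem_comap.1 hf)
  rwa [Ideal.mem_comap, ← AlgHom.comp_apply, hθ₀] at this

theorem secantIdeal2_edgeIdeal_le_sq {C : Set (Fin n)} (hC : G.IsVertexCover C) :
    secantIdeal2 F n (edgeIdeal F n G) ≤ Ideal.span (X '' C) ^ 2 := by
  refine secantIdeal2_le (zeroOn C) (zeroOn Cᶜ) (zeroOn_X_add_zeroOn_compl_X C)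
    (fun f hf => ?_) (Ideal.span_le.2 ?_)
  · have : zeroOn C f = 0 := by
      rw [← RingHom.mem_ker, ker_zeroOn]
      exact edgeIdeal_le_span_X_image hC hf
    simp [this]
  · rintro _ ⟨i, j, hij, rfl⟩
    by_cases hi : i ∈ C
    · by_cases hj : j ∈ C
      · simpa [hi, hj, pow_two] using
          Ideal.mul_mem_mul (Ideal.subset_span (Set.mem_image_of_mem X hi))
            (Ideal.subset_span (Set.mem_image_of_mem X hj))
      · simp [hj]
    · simp [hi]

theorem edgeIdeal_sq_add_secantIdeal2_le_symbolicSquare :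
    edgeIdeal F n G ^ 2 + secantIdeal2 F n (edgeIdeal F n G) ≤
      symbolicSquare F n (edgeIdeal F n G) := by
  refine le_symbolicSquare fun p hp hI => sup_le (Ideal.pow_right_mono hI 2) ?_
  have hspan : Ideal.span (X '' {v | X v ∈ p}) ≤ p :=
    Ideal.span_le.2 (by rintro _ ⟨v, hv, rfl⟩; exact hv)
  exact (secantIdeal2_edgeIdeal_le_sq (isVertexCover_setOf_X_mem hp hI)).trans
    (Ideal.pow_right_mono hspan 2)

theorem triangle_mem_secantIdeal2 {i j k : Fin n} (hij : G.Adj i j) (hjk : G.Adj j k)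
    (hki : G.Adj k i) : X i * X j * X k ∈ secantIdeal2 F n (edgeIdeal F n G) := by
  rw [secantIdeal2, Ideal.mem_comap, ← Ideal.Quotient.eq_zero_iff_mem]
  set J := Ideal.map (rename fun v => ((1 : Fin 3), v)) (edgeIdeal F n G) ⊔
    Ideal.map (rename fun v => ((2 : Fin 3), v)) (edgeIdeal F n G) ⊔
    Ideal.span {f | ∃ i : Fin n, f = X (0, i) - X (1, i) - X (2, i)}
  have hX (v : Fin n) : Ideal.Quotient.mk J (X (0, v)) =
      Ideal.Quotient.mk J (X (1, v)) + Ideal.Quotient.mk J (X (2, v)) := by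
    rw [← map_add, Ideal.Quotient.eq, ← sub_sub]
    exact Ideal.mem_sup_right (Ideal.subset_span ⟨v, rfl⟩)
  have h₁ {u w : Fin n} (huw : G.Adj u w) :
      Ideal.Quotient.mk J (X (1, u)) * Ideal.Quotient.mk J (X (1, w)) = 0 := by
    rw [← map_mul, Ideal.Quotient.eq_zero_iff_mem]
    refine Ideal.mem_sup_left (Ideal.mem_sup_left ?_)
    simpa using Ideal.mem_map_of_mem (rename fun v => ((1 : Fin 3), v)) (X_mul_X_mem_edgeIdeal huw)
  have h₂ {u w : Fin n} (huw : G.Adj u w) :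
      Ideal.Quotient.mk J (X (2, u)) * Ideal.Quotient.mk J (X (2, w)) = 0 := by
    rw [← map_mul, Ideal.Quotient.eq_zero_iff_mem]
    refine Ideal.mem_sup_left (Ideal.mem_sup_right ?_)
    simpa using Ideal.mem_map_of_mem (rename fun v => ((2 : Fin 3), v)) (X_mul_X_mem_edgeIdeal huw)
  simp only [map_mul, rename_X, hX]
  exact add_mul_add_mul_add_eq_zero (h₁ hij) (h₁ hki.symm) (h₁ hjk) (h₂ hij) (h₂ hki.symm) (h₂ hjk)

theorem span_trianglesAndEdgePairs_le :
    Ideal.span ((fun s => monomial s 1) '' G.trianglesAndEdgePairs) ≤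
      edgeIdeal F n G ^ 2 + secantIdeal2 F n (edgeIdeal F n G) := by
  rw [image_monomial_trianglesAndEdgePairs, Ideal.span_le]
  rintro _ (⟨i, j, k, hij, hjk, hki, rfl⟩ | ⟨i, j, k, l, hij, hkl, rfl⟩)
  · exact Submodule.mem_sup_right (triangle_mem_secantIdeal2 hij hjk hki)
  · rw [mul_assoc (X i * X j), pow_two]
    exact Submodule.mem_sup_left
      (Ideal.mul_mem_mul (X_mul_X_mem_edgeIdeal hij) (X_mul_X_mem_edgeIdeal hkl))

end EdgeIdeal

/-- For an edge ideal, `I(G)^{(2)} = I(G)² + I(G)^{2*}`; in particular it is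
generated by the triangle monomials `xᵢxⱼx_k` and the monomials `xᵢxⱼx_kx_l`
coming from pairs of edges. -/
theorem symbolicSquare_edgeIdeal (n : ℕ) (G : SimpleGraph (Fin n)) :
    symbolicSquare K n (edgeIdeal K n G) =
      edgeIdeal K n G ^ 2 + secantIdeal2 K n (edgeIdeal K n G) ∧
    symbolicSquare K n (edgeIdeal K n G) =
      Ideal.span ({f | ∃ i j k : Fin n,
          G.Adj i j ∧ G.Adj j k ∧ G.Adj k i ∧ f = X i * X j * X k} ∪
        {f | ∃ i j k l : Fin n,
          G.Adj i j ∧ G.Adj k l ∧ f = X i * X j * X k * X l}) := by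
  rw [← image_monomial_trianglesAndEdgePairs]
  have h₁ := symbolicSquare_edgeIdeal_le_span (F := K) (G := G)
  have h₂ := span_trianglesAndEdgePairs_le (F := K) (G := G)
  have h₃ := edgeIdeal_sq_add_secantIdeal2_le_symbolicSquare (F := K) (G := G)
  exact ⟨le_antisymm (h₁.trans h₂) h₃, le_antisymm h₁ (h₂.trans h₃)⟩
end

section
/- Let k ≥ 1 and let i₁ < j₁ < i₂ < j₂ < ⋯ < i_{2k+1} < j_{2k+1} be 4k+2 points in circular order. The fixed-point free involution π = ∏_{l=1}^{2k+1} (i_l j_{l+k-1}) (indices mod 2k+1) on these 4k+2 points, viewed as a perfect matching by chords, has cyclic crossing number C(2k+1, 2) − (2k+1), i.e., exactly 2k+1 of its C(2k+1,2) pairs of chords are noncrossing. -/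
/-!
Only the relative order of the endpoints matters for crossing, so we may relabel the points by
their positions `i_l ↦ 2l`, `j_l ↦ 2l + 1`; chord `l` then joins `2l` to `2σ(l) + 1` with
`σ(l) = l + k - 1 mod 2k + 1`. Comparing the four positions shows that chords `a < b` are disjoint
and noncrossing exactly when `b - a ∈ {k, k + 1}`, i.e. when `b ≡ a ± k mod 2k + 1`, and each `a`
has exactly one such partner `b ≡ a + k`, giving `2k + 1` noncrossing pairs.
-/

/-- Chords `{a,b}` and `{c,d}` on circularly ordered points (labeled by their
position in the circular order) cross: they share an endpoint or interleave. -/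
def crossN (a b c d : ℕ) : Prop :=
  (a = c ∨ a = d ∨ b = c ∨ b = d) ∨
  (min a b < min c d ∧ min c d < max a b ∧ max a b < max c d) ∨
  (min c d < min a b ∧ min a b < max c d ∧ max c d < max a b)

instance : ∀ a b c d : ℕ, Decidable (crossN a b c d) := by
  unfold crossN; infer_instance

open Fin.NatCast

open Finset

lemma crossN_comp_iff_of_strictMonoOn {f : ℕ → ℕ} {s : Set ℕ} (hf : StrictMonoOn f s)
    {a b c d : ℕ} (ha : a ∈ s) (hb : b ∈ s) (hc : c ∈ s) (hd : d ∈ s) :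
    crossN (f a) (f b) (f c) (f d) ↔ crossN a b c d := by
  have hmin : ∀ {x y}, x ∈ s → y ∈ s → min x y ∈ s := fun hx hy => min_rec' (· ∈ s) hx hy
  have hmax : ∀ {x y}, x ∈ s → y ∈ s → max x y ∈ s := fun hx hy => max_rec' (· ∈ s) hx hy
  unfold crossN
  rw [← hf.monotoneOn.map_min ha hb, ← hf.monotoneOn.map_min hc hd,
    ← hf.monotoneOn.map_max ha hb, ← hf.monotoneOn.map_max hc hd,
    hf.injOn.eq_iff ha hc, hf.injOn.eq_iff ha hd, hf.injOn.eq_iff hb hc, hf.injOn.eq_iff hb hd,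
    hf.lt_iff_lt (hmin ha hb) (hmin hc hd), hf.lt_iff_lt (hmin hc hd) (hmax ha hb),
    hf.lt_iff_lt (hmax ha hb) (hmax hc hd), hf.lt_iff_lt (hmin hc hd) (hmin ha hb),
    hf.lt_iff_lt (hmin ha hb) (hmax hc hd), hf.lt_iff_lt (hmax hc hd) (hmax ha hb)]

section Interleave

variable {n : ℕ} (i j : Fin n → ℕ)

def interleave (x : ℕ) : ℕ :=
  if h : x / 2 < n then if x % 2 = 0 then i ⟨x / 2, h⟩ else j ⟨x / 2, h⟩ else 0

lemma interleave_two_mul {l : ℕ} (hl : l < n) : interleave i j (2 * l) = i ⟨l, hl⟩ := by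
  simp [interleave, hl]

lemma interleave_two_mul_add_one {l : ℕ} (hl : l < n) :
    interleave i j (2 * l + 1) = j ⟨l, hl⟩ := by
  have h : (2 * l + 1) / 2 = l := by omega
  simp [interleave, h, hl]

end Interleave

lemma strictMonoOn_interleave {n : ℕ} {i j : Fin (n + 1) → ℕ} (hij : ∀ l, i l < j l)
    (hji : ∀ l : Fin (n + 1), (h : l.val + 1 < n + 1) → j l < i ⟨l.val + 1, h⟩) :
    StrictMonoOn (interleave i j) (Set.Iic (2 * n + 1)) := by
  refine strictMonoOn_Iic_of_lt_succ fun m hm => ?_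
  rw [Order.succ_eq_add_one]
  obtain ⟨l, rfl | rfl⟩ := Nat.even_or_odd' m
  · rw [interleave_two_mul i j (by omega), interleave_two_mul_add_one i j (by omega)]
    exact hij _
  · rw [interleave_two_mul_add_one i j (by omega), show 2 * l + 1 + 1 = 2 * (l + 1) by ring,
      interleave_two_mul i j (by omega)]
    exact hji ⟨l, by omega⟩ _

lemma val_add_sub_one_eq_ite {k : ℕ} (hk : 1 ≤ k) (p : Fin (2 * k + 1)) :
    ((p + k - 1 : Fin (2 * k + 1)) : ℕ) =
      if p.val ≤ k + 1 then p.val + k - 1 else p.val - (k + 2) := by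
  have hadd := Fin.val_add_eq_ite p (k : Fin (2 * k + 1))
  rw [Fin.val_natCast, Nat.mod_eq_of_lt (by omega)] at hadd
  rw [Fin.coe_sub_one]
  simp only [Fin.ext_iff, hadd, Fin.val_zero]
  split_ifs <;> omega

lemma crossN_chord_positions_iff {k : ℕ} (hk : 1 ≤ k) {a b : Fin (2 * k + 1)} (hab : a < b) :
    crossN (2 * a) (2 * (a + k - 1 : Fin (2 * k + 1)) + 1)
        (2 * b) (2 * (b + k - 1 : Fin (2 * k + 1)) + 1) ↔
      ¬(b.val = a.val + k ∨ b.val = a.val + k + 1) := by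
  have ha := val_add_sub_one_eq_ite hk a
  have hb := val_add_sub_one_eq_ite hk b
  have hb_lt := b.isLt
  rw [Fin.lt_def] at hab
  unfold crossN
  split_ifs at ha hb <;> omega

lemma crossN_iff_of_interleaved {k : ℕ} (hk : 1 ≤ k) {i j : Fin (2 * k + 1) → ℕ}
    (hij : ∀ l, i l < j l)
    (hji : ∀ l : Fin (2 * k + 1), (h : l.val + 1 < 2 * k + 1) → j l < i ⟨l.val + 1, h⟩)
    {a b : Fin (2 * k + 1)} (hab : a < b) :
    crossN (i a) (j (a + k - 1)) (i b) (j (b + k - 1)) ↔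
      ¬(b.val = a.val + k ∨ b.val = a.val + k + 1) := by
  have heven : ∀ l : Fin (2 * k + 1), 2 * l.val ∈ Set.Iic (2 * (2 * k) + 1) := fun l => by
    simp only [Set.mem_Iic]; omega
  have hodd : ∀ l : Fin (2 * k + 1), 2 * l.val + 1 ∈ Set.Iic (2 * (2 * k) + 1) := fun l => by
    simp only [Set.mem_Iic]; omega
  rw [← crossN_chord_positions_iff hk hab,
    ← crossN_comp_iff_of_strictMonoOn (strictMonoOn_interleave hij hji) (heven a) (hodd _)
      (heven b) (hodd _),
    interleave_two_mul i j a.isLt, interleave_two_mul i j b.isLt,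
    interleave_two_mul_add_one i j (a + k - 1).isLt,
    interleave_two_mul_add_one i j (b + k - 1).isLt]

lemma card_filter_snd_eq_fst_add_or_add_one {k : ℕ} (hk : 1 ≤ k) :
    #{p : Fin (2 * k + 1) × Fin (2 * k + 1) |
      p.1 < p.2 ∧ (p.2.val = p.1.val + k ∨ p.2.val = p.1.val + k + 1)} = 2 * k + 1 := by
  refine (card_nbij' (t := univ) (fun p => if p.2.val = p.1.val + k then p.1 else p.2)
    (fun m => if h : m.val ≤ k then (m, ⟨m + k, by omega⟩) else (⟨m - (k + 1), by omega⟩, m))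
    (fun _ _ => mem_coe.2 (mem_univ _)) ?_ ?_ ?_).trans (card_fin _)
  · intro m _
    have := m.isLt
    simp only [coe_filter, mem_univ, true_and, Set.mem_ofPred_eq]
    split_ifs <;> simp only [Fin.lt_def, true_or, and_true] <;> omega
  · rintro ⟨a, b⟩ hab
    simp only [coe_filter, mem_univ, true_and, Set.mem_ofPred_eq, Fin.lt_def] at hab
    have := b.isLt
    dsimp only
    split_ifs <;> simp [Prod.ext_iff, Fin.ext_iff] <;> omega
  · intro m _
    by_cases hm : m.val ≤ k
    · simp [hm]
    · have : m.val ≠ m.val - (k + 1) + k := by omega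
      simp [hm, this]

/-- The matching `π = ∏ (i_l j_{l+k-1})` on points `i₁ < j₁ < ⋯ < i_{2k+1} <
j_{2k+1}` in circular order has exactly `2k+1` noncrossing pairs of chords,
i.e. cyclic crossing number `C(2k+1,2) − (2k+1)`. -/
theorem crossingNumber_pi (k : ℕ) (hk : 1 ≤ k) (i j : Fin (2 * k + 1) → ℕ)
    (hij : ∀ l, i l < j l)
    (hji : ∀ l : Fin (2 * k + 1), (h : l.val + 1 < 2 * k + 1) →
      j l < i ⟨l.val + 1, h⟩) :
    (Finset.univ.filter (fun p : Fin (2 * k + 1) × Fin (2 * k + 1) =>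
        p.1 < p.2 ∧ crossN (i p.1) (j (p.1 + (k : Fin (2 * k + 1)) - 1))
          (i p.2) (j (p.2 + (k : Fin (2 * k + 1)) - 1)))).card =
      Nat.choose (2 * k + 1) 2 - (2 * k + 1) ∧
    (Finset.univ.filter (fun p : Fin (2 * k + 1) × Fin (2 * k + 1) =>
        p.1 < p.2 ∧ ¬ crossN (i p.1) (j (p.1 + (k : Fin (2 * k + 1)) - 1))
          (i p.2) (j (p.2 + (k : Fin (2 * k + 1)) - 1)))).card = 2 * k + 1 := by
  set pairs := univ.filter fun p : Fin (2 * k + 1) × Fin (2 * k + 1) => p.1 < p.2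
  set opposite := fun p : Fin (2 * k + 1) × Fin (2 * k + 1) =>
    p.2.val = p.1.val + k ∨ p.2.val = p.1.val + k + 1
  have hcross : univ.filter (fun p : Fin (2 * k + 1) × Fin (2 * k + 1) =>
      p.1 < p.2 ∧ crossN (i p.1) (j (p.1 + k - 1)) (i p.2) (j (p.2 + k - 1))) =
        pairs.filter (¬ opposite ·) := by
    rw [filter_filter]
    exact filter_congr fun p _ => and_congr_right (crossN_iff_of_interleaved hk hij hji)
  have hnoncross : univ.filter (fun p : Fin (2 * k + 1) × Fin (2 * k + 1) =>
      p.1 < p.2 ∧ ¬ crossN (i p.1) (j (p.1 + k - 1)) (i p.2) (j (p.2 + k - 1))) =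
        pairs.filter opposite := by
    rw [filter_filter]
    exact filter_congr fun p _ => and_congr_right fun h =>
      (not_congr (crossN_iff_of_interleaved hk hij hji h)).trans not_not
  have hopposite : #(pairs.filter opposite) = 2 * k + 1 := by
    rw [filter_filter]
    exact card_filter_snd_eq_fst_add_or_add_one hk
  have hpairs : #pairs = Nat.choose (2 * k + 1) 2 := by
    simpa using Fintype.card_product_filter_lt (α := Fin (2 * k + 1))
  have hsplit := card_filter_add_card_filter_not (s := pairs) opposite
  refine ⟨?_, hnoncross ▸ hopposite⟩
  rw [hcross]
  omega
end

section
/- With points i₁ < j₁ < ⋯ < i_{2k+1} < j_{2k+1} in circular order and Z = ⟨(i_l j_{l−1}) : l = 1,…,2k+1⟩ acting on the symmetric group by conjugation, the stabilizer in Z of the involution π = ∏_{l=1}^{2k+1} (i_l j_{l+k-1}) is trivial; consequently the orbit of π under Z-conjugation has exactly 2^{2k+1} elements. -/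
/-!
The generators of `Z` are disjoint transpositions of the pairs `{i_l, j_{l-1}}`, so `Z` is the
image of the injective homomorphism `(Perm Bool)^{2k+1} → Perm α` that lets the `l`-th coordinate
act on the `l`-th pair; hence `|Z| = 2^{2k+1}`. If `σ ∈ Z` swaps the pair `u` and commutes
with `π`, then `σ (π i_u) = σ j_{u+k-1}` lies in the pair `u + k`, while
`π (σ i_u) = π j_{u-1} = i_{u-k}` lies in the pair `u - k`; so `2k ≡ 0 (mod 2k+1)`, impossible
for `k ≥ 1`. Thus the stabilizer is trivial and the orbit has `|Z|` elements.
-/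

open Function Equiv Equiv.Perm Fin.NatCast

namespace Equiv.Perm

variable {ι α : Type*}

/-- `x` acts on the pair `e ⟨l, false⟩, e ⟨l, true⟩` by `x l` and fixes everything off the range
of `e`. -/
noncomputable def pairPermHom (e : (Σ _ : ι, Bool) → α) (he : Injective e) :
    (ι → Perm Bool) →* Perm α := by
  classical
  exact (extendDomainHom (Equiv.ofInjective e he)).comp (sigmaCongrRightHom fun _ => Bool)

variable {e : (Σ _ : ι, Bool) → α}

theorem pairPermHom_apply (he : Injective e) (x : ι → Perm Bool) (l : ι) (b : Bool) :
    pairPermHom e he x (e ⟨l, b⟩) = e ⟨l, x l b⟩ := by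
  classical
  exact extendDomain_apply_image _ (Equiv.ofInjective e he) ⟨l, b⟩

theorem pairPermHom_apply_of_notMem (he : Injective e) (x : ι → Perm Bool) {y : α}
    (hy : y ∉ Set.range e) :
    pairPermHom e he x y = y := by
  classical
  exact extendDomain_apply_not_subtype _ (Equiv.ofInjective e he) hy

theorem pairPermHom_injective (he : Injective e) : Injective (pairPermHom e he) := by
  classical
  exact (extendDomainHom_injective _).comp sigmaCongrRightHom_injective

theorem pairPermHom_mulSingle_swap [DecidableEq ι] [DecidableEq α] (he : Injective e) (l : ι) :
    pairPermHom e he (Pi.mulSingle l (swap false true)) = swap (e ⟨l, false⟩) (e ⟨l, true⟩) := by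
  ext y
  by_cases hy : y ∈ Set.range e
  · obtain ⟨⟨m, b⟩, rfl⟩ := hy
    rw [pairPermHom_apply]
    by_cases hml : m = l
    · subst hml
      cases b <;> simp
    · rw [Pi.mulSingle_eq_of_ne hml, swap_apply_of_ne_of_ne] <;>
        simp [he.eq_iff, hml]
  · rw [pairPermHom_apply_of_notMem he _ hy, swap_apply_of_ne_of_ne] <;>
      rintro rfl <;> exact hy ⟨_, rfl⟩

theorem closure_swap_pairs_eq_range [Finite ι] [DecidableEq α] (he : Injective e) :
    Subgroup.closure {τ : Perm α | ∃ l, τ = swap (e ⟨l, false⟩) (e ⟨l, true⟩)} =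
      (pairPermHom e he).range := by
  classical
  apply le_antisymm
  · rw [Subgroup.closure_le]
    rintro _ ⟨l, rfl⟩
    exact ⟨_, pairPermHom_mulSingle_swap he l⟩
  · rintro _ ⟨x, rfl⟩
    refine Subgroup.pi_mem_of_mulSingle_mem
      (H := (Subgroup.closure _).comap (pairPermHom e he)) x fun l => ?_
    obtain h | h : x l = 1 ∨ x l = swap false true := by
      generalize x l = b; revert b; decide
    · simp [h]
    · rw [Subgroup.mem_comap, h, pairPermHom_mulSingle_swap]
      exact Subgroup.subset_closure ⟨l, rfl⟩

theorem card_range_pairPermHom [Fintype ι] (he : Injective e) :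
    Nat.card (pairPermHom e he).range = 2 ^ Fintype.card ι := by
  rw [← SetLike.coe_sort_coe, MonoidHom.coe_range,
    Nat.card_range_of_injective (pairPermHom_injective he)]
  simp [Nat.card_pi, Fintype.card_perm]

end Equiv.Perm

theorem Subgroup.ncard_conj_orbit_eq_card {G : Type*} [Group G] (H : Subgroup G) {g : G}
    (hstab : ∀ σ ∈ H, σ * g * σ⁻¹ = g → σ = 1) :
    Set.ncard {ρ | ∃ σ ∈ H, ρ = σ * g * σ⁻¹} = Nat.card H := by
  have horbit : {ρ | ∃ σ ∈ H, ρ = σ * g * σ⁻¹} = (fun σ => σ * g * σ⁻¹) '' H := by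
    ext; simp [eq_comm]
  rw [horbit, Set.InjOn.ncard_image, ← Nat.card_coe_set_eq]
  · rfl
  intro σ hσ τ hτ h
  have hfix : (τ⁻¹ * σ) * g * (τ⁻¹ * σ)⁻¹ = g := calc
    _ = τ⁻¹ * (σ * g * σ⁻¹) * τ := by group
    _ = τ⁻¹ * (τ * g * τ⁻¹) * τ := by rw [show σ * g * σ⁻¹ = τ * g * τ⁻¹ from h]
    _ = g := by group
  exact (inv_mul_eq_one.mp (hstab _ (mul_mem (inv_mem hτ) hσ) hfix)).symm

theorem injective_sigma_cond {ι α : Type*} {f g : ι → α} (hf : Injective f) (hg : Injective g)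
    (hfg : ∀ a b, f a ≠ g b) : Injective (fun x : Σ _ : ι, Bool => cond x.2 (g x.1) (f x.1)) := by
  rintro ⟨a, _ | _⟩ ⟨b, _ | _⟩ h
  · obtain rfl := hf h; rfl
  · exact absurd h (hfg a b)
  · exact absurd h.symm (hfg b a)
  · obtain rfl := hg h; rfl

section GapEnds

variable {n : ℕ} {α : Type*} {i j : Fin n → α}

def gapEnds [NeZero n] (i j : Fin n → α) : (Σ _ : Fin n, Bool) → α :=
  fun x => cond x.2 (j (x.1 - 1)) (i x.1)

theorem eq_one_of_conj_pairPermHom_gapEnds [NeZero n] (he : Injective (gapEnds i j))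
    {s : Fin n} (hs : s + s ≠ 0) {π : Perm α}
    (hπ : ∀ l, π (i l) = j (l + s - 1) ∧ π (j (l + s - 1)) = i l) {x : Fin n → Perm Bool}
    (hx : pairPermHom _ he x * π * (pairPermHom _ he x)⁻¹ = π) : x = 1 := by
  set Φ := pairPermHom _ he x
  funext u
  by_contra hu
  have hxu : x u false = true := by
    rw [Pi.one_apply] at hu
    generalize x u = b at hu; revert b; decide
  have hcomm : Φ (π (i u)) = π (Φ (i u)) := congrArg (· (i u)) (mul_inv_eq_iff_eq_mul.mp hx)
  have h1 : Φ (π (i u)) = gapEnds i j ⟨u + s, x (u + s) true⟩ := by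
    rw [(hπ u).1]
    exact pairPermHom_apply he x (u + s) true
  have h2 : π (Φ (i u)) = gapEnds i j ⟨u - s, false⟩ := by
    rw [show i u = gapEnds i j ⟨u, false⟩ from rfl, pairPermHom_apply, hxu]
    exact (by simpa using (hπ (u - s)).2 : π (j (u - 1)) = i (u - s))
  have hus : u + s = u - s := congrArg Sigma.fst (he (h1.symm.trans (hcomm.trans h2)))
  exact hs (add_left_cancel (a := u) (by rw [← add_assoc, hus, sub_add_cancel, add_zero]))

end GapEnds

section Interleaved

variable {n : ℕ} {α : Type*} [LinearOrder α] {i j : Fin n → α}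

def Interleaved (i j : Fin n → α) : Prop :=
  (∀ l, i l < j l) ∧ ∀ l : Fin n, (h : l.val + 1 < n) → j l < i ⟨l.val + 1, h⟩

theorem Interleaved.lt (h : Interleaved i j) :
    ∀ {l m : Fin n}, l < m → j l < i m := by
  rintro l ⟨m, hm⟩ hlm
  induction m with
  | zero => simp [Fin.lt_def] at hlm
  | succ m ih =>
    have hm' : m < n := by omega
    have step : j ⟨m, hm'⟩ < i ⟨m + 1, hm⟩ := h.2 ⟨m, hm'⟩ hm
    obtain hl | rfl : l < ⟨m, hm'⟩ ∨ l = ⟨m, hm'⟩ := by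
      simp only [Fin.lt_def, Fin.ext_iff] at hlm ⊢; omega
    · exact (ih hm' hl).trans ((h.1 _).trans step)
    · exact step

theorem Interleaved.strictMono_left (h : Interleaved i j) : StrictMono i :=
  fun _ _ hlm => (h.1 _).trans (h.lt hlm)

theorem Interleaved.strictMono_right (h : Interleaved i j) : StrictMono j :=
  fun _ _ hlm => (h.lt hlm).trans (h.1 _)

theorem Interleaved.ne (h : Interleaved i j) (a b : Fin n) : i a ≠ j b := by
  rcases le_or_gt a b with hab | hab
  · exact (h.strictMono_left.monotone hab |>.trans_lt (h.1 b)).ne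
  · exact (h.lt hab).ne'

theorem Interleaved.injective_gapEnds [NeZero n] (h : Interleaved i j) :
    Injective (gapEnds i j) :=
  injective_sigma_cond h.strictMono_left.injective
    (h.strictMono_right.injective.comp (sub_left_injective (b := 1))) fun a b => h.ne a (b - 1)

end Interleaved

theorem Fin.natCast_add_self_ne_zero {k : ℕ} (hk : 1 ≤ k) : (k : Fin (2 * k + 1)) + k ≠ 0 := by
  rw [← Nat.cast_add, Ne, Fin.natCast_eq_zero]
  intro h
  have := Nat.le_of_dvd (by omega) h
  omega

theorem stabilizer_trivial_orbit_size_general (k : ℕ) (hk : 1 ≤ k) {α : Type*}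
    [LinearOrder α] (i j : Fin (2 * k + 1) → α)
    (hij : ∀ l, i l < j l)
    (hji : ∀ l : Fin (2 * k + 1), (h : l.val + 1 < 2 * k + 1) →
      j l < i ⟨l.val + 1, h⟩)
    (π : Equiv.Perm α)
    (hπ : ∀ l : Fin (2 * k + 1),
      π (i l) = j (l + (k : Fin (2 * k + 1)) - 1) ∧
      π (j (l + (k : Fin (2 * k + 1)) - 1)) = i l) :
    (∀ σ ∈ Subgroup.closure
        {τ : Equiv.Perm α | ∃ l : Fin (2 * k + 1), τ = Equiv.swap (i l) (j (l - 1))},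
      σ * π * σ⁻¹ = π → σ = 1) ∧
    Set.ncard {ρ : Equiv.Perm α | ∃ σ ∈ Subgroup.closure
        {τ : Equiv.Perm α | ∃ l : Fin (2 * k + 1), τ = Equiv.swap (i l) (j (l - 1))},
      ρ = σ * π * σ⁻¹} = 2 ^ (2 * k + 1) := by
  have he := Interleaved.injective_gapEnds ⟨hij, hji⟩
  have hZ : Subgroup.closure {τ : Perm α | ∃ l : Fin (2 * k + 1), τ = swap (i l) (j (l - 1))} =
      (pairPermHom _ he).range :=
    closure_swap_pairs_eq_range he
  have hstab : ∀ σ ∈ (pairPermHom _ he).range, σ * π * σ⁻¹ = π → σ = 1 := by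
    rintro _ ⟨x, rfl⟩ hx
    rw [eq_one_of_conj_pairPermHom_gapEnds he (Fin.natCast_add_self_ne_zero hk) hπ hx, map_one]
  rw [hZ, Subgroup.ncard_conj_orbit_eq_card _ hstab, card_range_pairPermHom, Fintype.card_fin]
  exact ⟨hstab, rfl⟩

/-- For the fixed-point free involution `π = ∏ (i_l j_{l+k-1})` on the
circularly ordered letters `i₁ < j₁ < ⋯ < i_{2k+1} < j_{2k+1}`, the stabilizer
of `π` under conjugation by the group `Z = ⟨(i_l j_{l−1})⟩` is trivial, so the
`Z`-conjugation orbit of `π` has exactly `2^{2k+1}` elements. -/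
theorem stabilizer_trivial_orbit_size (k : ℕ) (hk : 1 ≤ k) {α : Type*}
    [LinearOrder α] (i j : Fin (2 * k + 1) → α)
    (hij : ∀ l, i l < j l)
    (hji : ∀ l : Fin (2 * k + 1), (h : l.val + 1 < 2 * k + 1) →
      j l < i ⟨l.val + 1, h⟩)
    (π : Equiv.Perm α)
    (hπ : ∀ l : Fin (2 * k + 1),
      π (i l) = j (l + (k : Fin (2 * k + 1)) - 1) ∧
      π (j (l + (k : Fin (2 * k + 1)) - 1)) = i l)
    (hfix : ∀ x : α, (∀ l, x ≠ i l ∧ x ≠ j l) → π x = x) :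
    (∀ σ ∈ Subgroup.closure
        {τ : Equiv.Perm α | ∃ l : Fin (2 * k + 1), τ = Equiv.swap (i l) (j (l - 1))},
      σ * π * σ⁻¹ = π → σ = 1) ∧
    Set.ncard {ρ : Equiv.Perm α | ∃ σ ∈ Subgroup.closure
        {τ : Equiv.Perm α | ∃ l : Fin (2 * k + 1), τ = Equiv.swap (i l) (j (l - 1))},
      ρ = σ * π * σ⁻¹} = 2 ^ (2 * k + 1) :=
  stabilizer_trivial_orbit_size_general k hk i j hij hji π hπ
end

section
/- Conjugating a fixed-point free involution on circularly ordered points by a transposition (a b), where a and b are adjacent in the circular order and matched to distinct other points, changes the cyclic crossing number of the associated chord matching by at most one. -/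
/-- The cyclic crossing number of the chord matching of an involution `τ` on
`N` circularly ordered points: the number of (unordered) pairs of chords
`{x, τ x}`, `{y, τ y}` that cross. -/
def crossingNumber (N : ℕ) (τ : Equiv.Perm (Fin N)) : ℕ :=
  (Finset.univ.filter (fun p : Fin N × Fin N =>
    p.1 < τ p.1 ∧ p.2 < τ p.2 ∧ p.1 < p.2 ∧
    crossN (p.1 : ℕ) (τ p.1 : ℕ) (p.2 : ℕ) (τ p.2 : ℕ))).card

lemma cross_outer (a b c d : ℕ) : crossN a b c d ↔ crossN c d a b := by unfold crossN; omega

lemma adj1 (a c e f : ℕ) (h3 : e ≠ a) (h4 : e ≠ a+1)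
    (h5 : f ≠ a) (h6 : f ≠ a+1) :
    crossN (min a c) (max a c) e f ↔ crossN (min (a+1) c) (max (a+1) c) e f := by
  unfold crossN; omega

lemma adj2 (T c e f : ℕ) (h1 : c ≠ 0) (h3 : e ≠ 0) (h4 : e ≠ T)
    (h5 : f ≠ 0) (h6 : f ≠ T) (hc : c < T) (he : e < T+1) (hf : f < T+1) :
    crossN (min T c) (max T c) e f ↔ crossN (min 0 c) (max 0 c) e f := by
  unfold crossN; omega

lemma ne_min' {α} [LinearOrder α] {x p q : α} (h1 : x ≠ p) (h2 : x ≠ q) : x ≠ min p q := by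
  rcases min_cases p q with ⟨h,_⟩|⟨h,_⟩ <;> rw [h] <;> assumption

lemma min_ne_min {α} [LinearOrder α] {p q s t : α} (h1 : p ≠ s) (h2 : p ≠ t) (h3 : q ≠ s)
    (h4 : q ≠ t) : min p q ≠ min s t := by
  rcases min_cases p q with ⟨h,_⟩|⟨h,_⟩ <;> rw [h] <;> [exact ne_min' h1 h2; exact ne_min' h3 h4]

lemma key (m : ℕ) (τ σ : Equiv.Perm (Fin (2*m+2)))
    (hinv : ∀ x, τ (τ x) = x) (hfpf : ∀ x, τ x ≠ x)
    (a : Fin (2*m+2)) (hab : τ a ≠ a + 1)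
    (hσ : ∀ x, σ x = Equiv.swap a (a+1) (τ (Equiv.swap a (a+1) x))) :
    crossingNumber (2*m+2) τ ≤ crossingNumber (2*m+2) σ + 1 := by
  classical
  -- val facts
  have vne : ∀ {s t : Fin (2*m+2)}, s ≠ t → (s:ℕ) ≠ (t:ℕ) := fun h hh => h (Fin.val_inj.mp hh)
  have vmin : ∀ s t : Fin (2*m+2), ((min s t : Fin (2*m+2)) : ℕ) = min (s:ℕ) (t:ℕ) := by
    intro s t
    rcases le_total s t with h|h
    · rw [min_eq_left h, min_eq_left (Fin.le_def.mp h)]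
    · rw [min_eq_right h, min_eq_right (Fin.le_def.mp h)]
  have vmax : ∀ s t : Fin (2*m+2), ((max s t : Fin (2*m+2)) : ℕ) = max (s:ℕ) (t:ℕ) := by
    intro s t
    rcases le_total s t with h|h
    · rw [max_eq_right h, max_eq_right (Fin.le_def.mp h)]
    · rw [max_eq_left h, max_eq_left (Fin.le_def.mp h)]
  have hvadd : ((a + 1 : Fin (2*m+2)) : ℕ) = ((a:ℕ) + 1) % (2*m+2) := by
    rw [Fin.val_add, Fin.val_one]
  have hcase : ((a+1 : Fin (2*m+2)):ℕ) = (a:ℕ)+1 ∨ ((a:ℕ) = 2*m+1 ∧ ((a+1 : Fin (2*m+2)):ℕ) = 0) := by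
    have h1 := a.isLt
    rcases Nat.lt_or_ge ((a:ℕ)+1) (2*m+2) with h|h
    · left; rw [hvadd]; exact Nat.mod_eq_of_lt h
    · right
      have h2 : (a:ℕ)+1 = 2*m+2 := by omega
      refine ⟨by omega, ?_⟩
      rw [hvadd, h2]; simp
  have hba : a + 1 ≠ a := by
    intro h
    have h2 := congrArg Fin.val h
    rw [hvadd] at h2
    have := a.isLt
    omega
  -- the partners
  obtain ⟨c, hc⟩ : ∃ c, c = τ a := ⟨_, rfl⟩
  obtain ⟨d, hd⟩ : ∃ d, d = τ (a+1) := ⟨_, rfl⟩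
  have hca : c ≠ a := hc ▸ hfpf a
  have hcb : c ≠ a + 1 := hc ▸ hab
  have hdb : d ≠ a + 1 := hd ▸ hfpf _
  have hda : d ≠ a := by
    intro h
    apply hab
    have h2 := hinv (a+1)
    rw [← hd, h] at h2
    exact h2
  have hcd : c ≠ d := by
    intro h
    rw [hc, hd] at h
    exact hba (τ.injective h).symm
  have hτc : τ c = a := by rw [hc]; exact hinv a
  have hτd : τ d = a + 1 := by rw [hd]; exact hinv (a+1)
  -- σ values
  have hsa : σ a = d := by
    rw [hσ, Equiv.swap_apply_left, ← hd, Equiv.swap_apply_of_ne_of_ne hda hdb]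
  have hsb : σ (a+1) = c := by
    rw [hσ, Equiv.swap_apply_right, ← hc, Equiv.swap_apply_of_ne_of_ne hca hcb]
  have hsc : σ c = a + 1 := by
    rw [hσ, Equiv.swap_apply_of_ne_of_ne hca hcb, hτc, Equiv.swap_apply_left]
  have hsd : σ d = a := by
    rw [hσ, Equiv.swap_apply_of_ne_of_ne hda hdb, hτd, Equiv.swap_apply_right]
  have hsx : ∀ x : Fin (2*m+2), x ≠ a → x ≠ a+1 → x ≠ c → x ≠ d → σ x = τ x := by
    intro x h1 h2 h3 h4
    rw [hσ, Equiv.swap_apply_of_ne_of_ne h1 h2, Equiv.swap_apply_of_ne_of_ne]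
    · intro h; exact h3 (by rw [← hinv x, h, ← hc])
    · intro h; exact h4 (by rw [← hinv x, h, ← hd])
  -- rep classification
  have repc : ∀ x : Fin (2*m+2), x < τ x →
      (x = min a c ∧ τ x = max a c) ∨ (x = min (a+1) d ∧ τ x = max (a+1) d) ∨
      (x ≠ a ∧ x ≠ a+1 ∧ x ≠ c ∧ x ≠ d ∧ τ x ≠ a ∧ τ x ≠ a+1 ∧ τ x ≠ c ∧ τ x ≠ d) := by
    intro x hx
    by_cases h1 : x = a
    · subst h1; left
      rw [← hc] at hx ⊢
      exact ⟨(min_eq_left hx.le).symm, (max_eq_right hx.le).symm⟩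
    by_cases h2 : x = c
    · subst h2; left
      rw [hτc] at hx ⊢
      exact ⟨(min_eq_right hx.le).symm, (max_eq_left hx.le).symm⟩
    by_cases h3 : x = a+1
    · subst h3; right; left
      rw [← hd] at hx ⊢
      exact ⟨(min_eq_left hx.le).symm, (max_eq_right hx.le).symm⟩
    by_cases h4 : x = d
    · subst h4; right; left
      rw [hτd] at hx ⊢
      exact ⟨(min_eq_right hx.le).symm, (max_eq_left hx.le).symm⟩
    · right; right
      refine ⟨h1, h3, h2, h4, ?_, ?_, ?_, ?_⟩
      · intro h; exact h2 (by rw [← hinv x, h, ← hc])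
      · intro h; exact h4 (by rw [← hinv x, h, ← hd])
      · intro h; exact h1 (by rw [← hinv x, h, hτc])
      · intro h; exact h3 (by rw [← hinv x, h, hτd])
  -- Fin-level adjacency lemmas
  have adjF : ∀ g e f : Fin (2*m+2), g ≠ a → g ≠ a+1 → e ≠ a → e ≠ a+1 → f ≠ a → f ≠ a+1 →
      (crossN ↑(min a g) ↑(max a g) ↑e ↑f ↔ crossN ↑(min (a+1) g) ↑(max (a+1) g) ↑e ↑f) := by
    intro g e f hg1 hg2 he1 he2 hf1 hf2
    rw [vmin, vmax, vmin, vmax]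
    rcases hcase with h | ⟨h1, h2⟩
    · rw [h]
      exact adj1 ↑a ↑g ↑e ↑f (vne he1) (by rw [← h]; exact vne he2) (vne hf1)
        (by rw [← h]; exact vne hf2)
    · have hg1' := vne hg1; have hg2' := vne hg2
      have he1' := vne he1; have he2' := vne he2
      have hf1' := vne hf1; have hf2' := vne hf2
      rw [h1] at hg1' he1' hf1'; rw [h2] at hg2' he2' hf2'
      rw [h1, h2]
      exact adj2 (2*m+1) ↑g ↑e ↑f hg2' he2' he1' hf2' hf1'
        (by have := g.isLt; omega) (by have := e.isLt; omega) (by have := f.isLt; omega)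
  have adjF2 : ∀ e f : Fin (2*m+2), e ≠ a → e ≠ a+1 → f ≠ a → f ≠ a+1 →
      (crossN ↑(min (a+1) d) ↑(max (a+1) d) ↑e ↑f ↔ crossN ↑(min a d) ↑(max a d) ↑e ↑f) :=
    fun e f h1 h2 h3 h4 => (adjF d e f hda hdb h1 h2 h3 h4).symm
  -- σ values on new chords
  have hsv1 : σ (min (a+1) c) = max (a+1) c := by
    rcases le_total (a+1) c with h|h
    · rw [min_eq_left h, max_eq_right h, hsb]
    · rw [min_eq_right h, max_eq_left h, hsc]
  have hsv2 : σ (min a d) = max a d := by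
    rcases le_total a d with h|h
    · rw [min_eq_left h, max_eq_right h, hsa]
    · rw [min_eq_right h, max_eq_left h, hsd]
  have hlt1 : min (a+1) c < max (a+1) c := min_lt_max.mpr (Ne.symm hcb)
  have hlt2 : min a d < max a d := min_lt_max.mpr (Ne.symm hda)
  have hu12 : min a c ≠ min (a+1) d := min_ne_min (Ne.symm hba) (Ne.symm hda) hcb hcd
  have hv12 : min (a+1) c ≠ min a d := min_ne_min hba (Ne.symm hdb) hca hcd
  -- the relabeling map
  obtain ⟨r, hrdef⟩ : ∃ r : Fin (2*m+2) → Fin (2*m+2), ∀ x, r x =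
      if x = min a c then min (a+1) c else if x = min (a+1) d then min a d else x :=
    ⟨_, fun _ => rfl⟩
  have hr1 : r (min a c) = min (a+1) c := by rw [hrdef, if_pos rfl]
  have hr2 : r (min (a+1) d) = min a d := by
    rw [hrdef, if_neg (Ne.symm hu12), if_pos rfl]
  have hr3 : ∀ x : Fin (2*m+2), x ≠ a → x ≠ a+1 → x ≠ c → x ≠ d → r x = x := by
    intro x h1 h2 h3 h4
    rw [hrdef, if_neg (ne_min' h1 h3), if_neg (ne_min' h2 h4)]
  -- r is injective on representatives
  have rinj : ∀ x y : Fin (2*m+2), x < τ x → y < τ y → r x = r y → x = y := by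
    intro x y hx hy hxy
    rcases repc x hx with ⟨hx1, _⟩ | ⟨hx1, _⟩ | ⟨hx1, hx2, hx3, hx4, _⟩ <;>
      rcases repc y hy with ⟨hy1, _⟩ | ⟨hy1, _⟩ | ⟨hy1, hy2, hy3, hy4, _⟩
    · rw [hx1, hy1]
    · rw [hx1, hy1, hr1, hr2] at hxy; exact absurd hxy hv12
    · rw [hx1, hr1, hr3 y hy1 hy2 hy3 hy4] at hxy
      exact absurd hxy (Ne.symm (ne_min' hy2 hy3))
    · rw [hx1, hy1, hr2, hr1] at hxy; exact absurd hxy (Ne.symm hv12)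
    · rw [hx1, hy1]
    · rw [hx1, hr2, hr3 y hy1 hy2 hy3 hy4] at hxy
      exact absurd hxy (Ne.symm (ne_min' hy1 hy4))
    · rw [hy1, hr1, hr3 x hx1 hx2 hx3 hx4] at hxy
      exact absurd hxy (ne_min' hx2 hx3)
    · rw [hy1, hr2, hr3 x hx1 hx2 hx3 hx4] at hxy
      exact absurd hxy (ne_min' hx1 hx4)
    · rw [hr3 x hx1 hx2 hx3 hx4, hr3 y hy1 hy2 hy3 hy4] at hxy; exact hxy
  unfold crossingNumber
  have close : ∀ (X X' Y Y' : Fin (2*m+2)), σ X = X' → σ Y = Y' → X < X' → Y < Y' → X ≠ Y →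
      crossN ↑X ↑X' ↑Y ↑Y' →
      (min X Y, max X Y) ∈ Finset.univ.filter (fun p : Fin (2*m+2) × Fin (2*m+2) =>
        p.1 < σ p.1 ∧ p.2 < σ p.2 ∧ p.1 < p.2 ∧
        crossN (p.1 : ℕ) (σ p.1 : ℕ) (p.2 : ℕ) (σ p.2 : ℕ)) := by
    intro X X' Y Y' h1 h2 h3 h4 h5 h6
    rcases h5.lt_or_gt with h|h
    · rw [min_eq_left h.le, max_eq_right h.le]
      exact Finset.mem_filter.mpr ⟨Finset.mem_univ _,
        by rw [h1]; exact h3, by rw [h2]; exact h4, h, by rw [h1, h2]; exact h6⟩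
    · rw [min_eq_right h.le, max_eq_left h.le]
      exact Finset.mem_filter.mpr ⟨Finset.mem_univ _,
        by rw [h2]; exact h4, by rw [h1]; exact h3, h,
        by rw [h1, h2]; exact (cross_outer _ _ _ _).mp h6⟩
  set p₀ : Fin (2*m+2) × Fin (2*m+2) :=
    (min (min a c) (min (a+1) d), max (min a c) (min (a+1) d)) with hp₀
  set Sτ := Finset.univ.filter (fun p : Fin (2*m+2) × Fin (2*m+2) =>
      p.1 < τ p.1 ∧ p.2 < τ p.2 ∧ p.1 < p.2 ∧
      crossN (p.1 : ℕ) (τ p.1 : ℕ) (p.2 : ℕ) (τ p.2 : ℕ)) with hSτ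
  set Sσ := Finset.univ.filter (fun p : Fin (2*m+2) × Fin (2*m+2) =>
      p.1 < σ p.1 ∧ p.2 < σ p.2 ∧ p.1 < p.2 ∧
      crossN (p.1 : ℕ) (σ p.1 : ℕ) (p.2 : ℕ) (σ p.2 : ℕ)) with hSσ
  have hmem : ∀ p ∈ Sτ.erase p₀,
      (min (r p.1) (r p.2), max (r p.1) (r p.2)) ∈ Sσ := by
    intro p hp
    obtain ⟨hne, hp'⟩ := Finset.mem_erase.mp hp
    obtain ⟨-, hx, hy, hxy, hcr⟩ := Finset.mem_filter.mp hp'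
    rcases repc p.1 hx with ⟨hx1, hx2⟩ | ⟨hx1, hx2⟩ | ⟨hx1, hx2, hx3, hx4, hx5, hx6, hx7, hx8⟩ <;>
      rcases repc p.2 hy with ⟨hy1, hy2⟩ | ⟨hy1, hy2⟩ | ⟨hy1, hy2, hy3, hy4, hy5, hy6, hy7, hy8⟩
    · exact absurd (hx1.trans hy1.symm) hxy.ne
    · -- p = p₀
      exfalso; apply hne
      have hlt : min a c < min (a+1) d := by rw [← hx1, ← hy1]; exact hxy
      rw [hp₀]
      exact Prod.ext (by rw [min_eq_left hlt.le]; exact hx1)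
        (by rw [max_eq_right hlt.le]; exact hy1)
    · -- special chord (a,c) with normal chord
      have e1 : r p.1 = min (a+1) c := by rw [hx1]; exact hr1
      have e2 : r p.2 = p.2 := hr3 _ hy1 hy2 hy3 hy4
      rw [e1, e2]
      refine close _ _ _ _ hsv1 (hsx _ hy1 hy2 hy3 hy4) hlt1 hy
        (Ne.symm (ne_min' hy2 hy3)) ?_
      apply (adjF c p.2 (τ p.2) hca hcb hy1 hy2 hy5 hy6).mp
      rw [← hx1, ← hx2]; exact hcr
    · -- p = p₀ reversed
      exfalso; apply hne
      have hlt : min (a+1) d < min a c := by rw [← hx1, ← hy1]; exact hxy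
      rw [hp₀]
      exact Prod.ext (by rw [min_eq_right hlt.le]; exact hx1)
        (by rw [max_eq_left hlt.le]; exact hy1)
    · exact absurd (hx1.trans hy1.symm) hxy.ne
    · -- special chord (a+1,d) with normal chord
      have e1 : r p.1 = min a d := by rw [hx1]; exact hr2
      have e2 : r p.2 = p.2 := hr3 _ hy1 hy2 hy3 hy4
      rw [e1, e2]
      refine close _ _ _ _ hsv2 (hsx _ hy1 hy2 hy3 hy4) hlt2 hy
        (Ne.symm (ne_min' hy1 hy4)) ?_
      apply (adjF2 p.2 (τ p.2) hy1 hy2 hy5 hy6).mp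
      rw [← hx1, ← hx2]; exact hcr
    · -- normal with special chord (a,c)
      have e1 : r p.1 = p.1 := hr3 _ hx1 hx2 hx3 hx4
      have e2 : r p.2 = min (a+1) c := by rw [hy1]; exact hr1
      rw [e1, e2]
      refine close _ _ _ _ (hsx _ hx1 hx2 hx3 hx4) hsv1 hx hlt1
        (ne_min' hx2 hx3) ?_
      rw [cross_outer]
      apply (adjF c p.1 (τ p.1) hca hcb hx1 hx2 hx5 hx6).mp
      rw [← hy1, ← hy2, cross_outer]; exact hcr
    · -- normal with special chord (a+1,d)
      have e1 : r p.1 = p.1 := hr3 _ hx1 hx2 hx3 hx4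
      have e2 : r p.2 = min a d := by rw [hy1]; exact hr2
      rw [e1, e2]
      refine close _ _ _ _ (hsx _ hx1 hx2 hx3 hx4) hsv2 hx hlt2
        (ne_min' hx1 hx4) ?_
      rw [cross_outer]
      apply (adjF2 p.1 (τ p.1) hx1 hx2 hx5 hx6).mp
      rw [← hy1, ← hy2, cross_outer]; exact hcr
    · -- both normal
      have e1 : r p.1 = p.1 := hr3 _ hx1 hx2 hx3 hx4
      have e2 : r p.2 = p.2 := hr3 _ hy1 hy2 hy3 hy4
      rw [e1, e2]
      exact close _ _ _ _ (hsx _ hx1 hx2 hx3 hx4) (hsx _ hy1 hy2 hy3 hy4) hx hy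
        hxy.ne hcr
  have hinj : Set.InjOn (fun p : Fin (2*m+2) × Fin (2*m+2) =>
      (min (r p.1) (r p.2), max (r p.1) (r p.2))) ↑(Sτ.erase p₀) := by
    intro p hp q hq hFpq
    obtain ⟨-, hp'⟩ := Finset.mem_erase.mp (Finset.mem_coe.mp hp)
    obtain ⟨-, hq'⟩ := Finset.mem_erase.mp (Finset.mem_coe.mp hq)
    obtain ⟨-, hpx, hpy, hpxy, -⟩ := Finset.mem_filter.mp hp'
    obtain ⟨-, hqx, hqy, hqxy, -⟩ := Finset.mem_filter.mp hq'
    simp only [Prod.mk.injEq] at hFpq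
    obtain ⟨h1, h2⟩ := hFpq
    have hrp : r p.1 ≠ r p.2 := fun h => hpxy.ne (rinj _ _ hpx hpy h)
    have hrq : r q.1 ≠ r q.2 := fun h => hqxy.ne (rinj _ _ hqx hqy h)
    rcases hrp.lt_or_gt with h|h <;> rcases hrq.lt_or_gt with h'|h'
    · rw [min_eq_left h.le, min_eq_left h'.le] at h1
      rw [max_eq_right h.le, max_eq_right h'.le] at h2
      exact Prod.ext (rinj _ _ hpx hqx h1) (rinj _ _ hpy hqy h2)
    · rw [min_eq_left h.le, min_eq_right h'.le] at h1
      rw [max_eq_right h.le, max_eq_left h'.le] at h2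
      have e1 : p.1 = q.2 := rinj _ _ hpx hqy h1
      have e2 : p.2 = q.1 := rinj _ _ hpy hqx h2
      rw [e1, e2] at hpxy
      exact absurd hpxy (lt_asymm hqxy)
    · rw [min_eq_right h.le, min_eq_left h'.le] at h1
      rw [max_eq_left h.le, max_eq_right h'.le] at h2
      have e1 : p.2 = q.1 := rinj _ _ hpy hqx h1
      have e2 : p.1 = q.2 := rinj _ _ hpx hqy h2
      rw [e1, e2] at hpxy
      exact absurd hpxy (lt_asymm hqxy)
    · rw [min_eq_right h.le, min_eq_right h'.le] at h1
      rw [max_eq_left h.le, max_eq_left h'.le] at h2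
      exact Prod.ext (rinj _ _ hpx hqx h2) (rinj _ _ hpy hqy h1)
  have hcard : (Sτ.erase p₀).card ≤ Sσ.card :=
    Finset.card_le_card_of_injOn _ hmem hinj
  have hins : Sτ ⊆ insert p₀ (Sτ.erase p₀) := by
    intro z hz
    by_cases h : z = p₀
    · simp [h]
    · exact Finset.mem_insert_of_mem (Finset.mem_erase.mpr ⟨h, hz⟩)
  calc Sτ.card ≤ (insert p₀ (Sτ.erase p₀)).card := Finset.card_le_card hins
    _ ≤ (Sτ.erase p₀).card + 1 := Finset.card_insert_le _ _
    _ ≤ Sσ.card + 1 := by omega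

/-- Conjugating a fixed-point free involution on circularly ordered points by a
transposition `(a b)` of two circularly adjacent points that are matched to
distinct other points changes the cyclic crossing number by at most one. -/
theorem crossingNumber_conj_adjacent_swap (m : ℕ)
    (τ : Equiv.Perm (Fin (2 * m + 2)))
    (hinv : ∀ x, τ (τ x) = x) (hfpf : ∀ x, τ x ≠ x)
    (a : Fin (2 * m + 2)) (hab : τ a ≠ a + 1) :
    |(crossingNumber (2 * m + 2)
        (Equiv.swap a (a + 1) * τ * (Equiv.swap a (a + 1))⁻¹) : ℤ) -
      (crossingNumber (2 * m + 2) τ : ℤ)| ≤ 1 := by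
  set σ' := Equiv.swap a (a+1) * τ * (Equiv.swap a (a+1))⁻¹ with hσ'
  have hσ : ∀ x, σ' x = Equiv.swap a (a+1) (τ (Equiv.swap a (a+1) x)) := by
    intro x; simp [hσ', Equiv.Perm.mul_apply, Equiv.swap_inv]
  have hσ2 : ∀ x, τ x = Equiv.swap a (a+1) (σ' (Equiv.swap a (a+1) x)) := by
    intro x; rw [hσ]; simp [Equiv.swap_apply_self]
  have hinv' : ∀ x, σ' (σ' x) = x := by
    intro x; rw [hσ, hσ]; simp [Equiv.swap_apply_self, hinv]
  have hfpf' : ∀ x, σ' x ≠ x := by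
    intro x h
    rw [hσ] at h
    have h2 := congrArg (Equiv.swap a (a+1)) h
    rw [Equiv.swap_apply_self] at h2
    exact hfpf _ h2
  have hab' : σ' a ≠ a + 1 := by
    rw [hσ, Equiv.swap_apply_left]
    intro h
    have h2 := congrArg (Equiv.swap a (a+1)) h
    rw [Equiv.swap_apply_self, Equiv.swap_apply_right] at h2
    have h3 := hinv (a+1)
    rw [h2] at h3
    exact hab h3
  have k1 := key m τ σ' hinv hfpf a hab hσ
  have k2 := key m σ' τ hinv' hfpf' a hab' hσ2
  rw [abs_le]
  constructor <;> omega
end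

section
/- Let π : ℂ[x_{ij}] → ℂ[t,u] be the map x_{ij} ↦ t_i t_j + u_i u_j. The master polynomial f for the admissible sequence i₁ < j₁ < i₂ < j₂ < i₃ < j₃, namely f = x_{i₁j₃}x_{i₂j₁}x_{i₃j₂} summed with signs over the conjugation orbit as in its definition (equivalently the 8-term cubic x₁₂x₃₄x₅₆ − x₁₂x₃₅x₄₆ − x₁₃x₂₄x₅₆ − x₁₅x₂₆x₃₄ + x₁₃x₂₅x₄₆ + x₁₄x₂₆x₃₅ + x₁₅x₂₄x₃₆ − x₁₄x₂₅x₃₆ after relabeling), satisfies π(f) = 0. -/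
open MvPolynomial

/-- The substitution `x_{ij} ↦ t_i t_j + u_i u_j` parametrizing the second
secant variety of the toric variety of `Δ(2,n)`. -/
noncomputable def secantSubst (n : ℕ) :
    MvPolynomial (Fin n × Fin n) ℂ →ₐ[ℂ] MvPolynomial (Fin n ⊕ Fin n) ℂ :=
  aeval fun p : Fin n × Fin n =>
    X (Sum.inl p.1) * X (Sum.inl p.2) + X (Sum.inr p.1) * X (Sum.inr p.2)

/-- The degree-three master polynomial (the 8-term cubic, for the admissible
sequence `i₁ < j₁ < i₂ < j₂ < i₃ < j₃`) vanishes under the substitution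
`x_{ij} ↦ t_i t_j + u_i u_j`. -/
theorem masterPolynomial_deg3_vanishes (n : ℕ)
    (a₁ b₁ a₂ b₂ a₃ b₃ : Fin n)
    (h₁ : a₁ < b₁) (h₂ : b₁ < a₂) (h₃ : a₂ < b₂) (h₄ : b₂ < a₃) (h₅ : a₃ < b₃) :
    secantSubst n
      (X (a₁, b₁) * X (a₂, b₂) * X (a₃, b₃)
        - X (a₁, b₁) * X (a₂, a₃) * X (b₂, b₃)
        - X (a₁, a₂) * X (b₁, b₂) * X (a₃, b₃)
        - X (a₁, a₃) * X (b₁, b₃) * X (a₂, b₂)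
        + X (a₁, a₂) * X (b₁, a₃) * X (b₂, b₃)
        + X (a₁, b₂) * X (b₁, b₃) * X (a₂, a₃)
        + X (a₁, a₃) * X (b₁, b₂) * X (a₂, b₃)
        - X (a₁, b₂) * X (b₁, a₃) * X (a₂, b₃)) = 0 := by
  simp only [secantSubst, map_sub, map_add, map_mul, aeval_X]
  ring
end

section
/- The pentad polynomial f = x₁₂x₁₅x₂₃x₃₄x₄₅ − x₁₂x₁₃x₂₅x₃₄x₄₅ − x₁₂x₁₄x₂₃x₃₅x₄₅ + x₁₂x₁₄x₂₅x₃₄x₃₅ + x₁₂x₁₃x₂₄x₃₅x₄₅ − x₁₂x₁₅x₂₄x₃₄x₃₅ + x₁₃x₁₄x₂₃x₂₅x₄₅ − x₁₃x₁₄x₂₄x₂₅x₃₅ − x₁₃x₁₅x₂₃x₂₄x₄₅ + x₁₃x₁₅x₂₄x₂₅x₃₄ − x₁₄x₁₅x₂₃x₂₅x₃₄ + x₁₄x₁₅x₂₃x₂₄x₃₅ vanishes identically under the substitution x_{ij} = t_i t_j + u_i u_j. -/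
open MvPolynomial

/-- The pentad polynomial (indices `1,…,5` rendered as `0,…,4`) vanishes
identically under the substitution `x_{ij} = t_i t_j + u_i u_j`. -/
theorem pentad_vanishes :
    secantSubst 5
      (X (0, 1) * X (0, 4) * X (1, 2) * X (2, 3) * X (3, 4)
        - X (0, 1) * X (0, 2) * X (1, 4) * X (2, 3) * X (3, 4)
        - X (0, 1) * X (0, 3) * X (1, 2) * X (2, 4) * X (3, 4)
        + X (0, 1) * X (0, 3) * X (1, 4) * X (2, 3) * X (2, 4)
        + X (0, 1) * X (0, 2) * X (1, 3) * X (2, 4) * X (3, 4)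
        - X (0, 1) * X (0, 4) * X (1, 3) * X (2, 3) * X (2, 4)
        + X (0, 2) * X (0, 3) * X (1, 2) * X (1, 4) * X (3, 4)
        - X (0, 2) * X (0, 3) * X (1, 3) * X (1, 4) * X (2, 4)
        - X (0, 2) * X (0, 4) * X (1, 2) * X (1, 3) * X (3, 4)
        + X (0, 2) * X (0, 4) * X (1, 3) * X (1, 4) * X (2, 3)
        - X (0, 3) * X (0, 4) * X (1, 2) * X (1, 4) * X (2, 3)
        + X (0, 3) * X (0, 4) * X (1, 2) * X (1, 3) * X (2, 4)) = 0 := by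
  simp only [secantSubst, map_sub, map_add, map_mul, aeval_X]
  ring
end

section
/- For indices i₁ < i₂ < i₃ < i₄ < i₅ < i₆, the 3×3 minor of the matrix X with entries X_{ab} = x_{i_a i_{b+3}} (a,b ∈ {1,2,3}) vanishes identically under the substitution x_{ij} = t_i t_j + u_i u_j; hence it belongs to the second secant ideal Iₙ^{2*} of the second hypersimplex. -/
open MvPolynomial

/-- For `i₁ < ⋯ < i₆`, the determinant of the 3×3 off-diagonal minor
`(x_{i_a i_{b+3}})` vanishes under `x_{ij} ↦ t_i t_j + u_i u_j`; that is, it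
belongs to the second secant ideal of the second hypersimplex. -/
theorem offDiagonalMinor_in_secant (n : ℕ) (e : Fin 6 → Fin n)
    (he : StrictMono e) :
    (Matrix.det (Matrix.of fun a b : Fin 3 =>
        X (e ⟨a.val, by omega⟩, e ⟨b.val + 3, by omega⟩) :
      Matrix (Fin 3) (Fin 3) (MvPolynomial (Fin n × Fin n) ℂ))) ∈
      RingHom.ker (secantSubst n).toRingHom := by
  rw [RingHom.mem_ker]
  rw [Matrix.det_fin_three]
  simp only [Matrix.of_apply, map_add, map_sub, map_mul, AlgHom.toRingHom_eq_coe,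
    RingHom.coe_coe, secantSubst, aeval_X]
  ring
end
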